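/- arXiv:2012.01147 — 8 statements merged into one kernel-verified Lean document; each statement's English description precedes it below -/
import Mathlib

section
/- For coprime positive integers a and c, the Dedekind sums satisfy the reciprocity law s(a,c) + s(c,a) = -1/4 + (1/12)·(a/c + c/a + 1/(a·c)). -/
/-- The sawtooth function `((x)) = x - ⌊x⌋ - 1/2` for `x ∉ ℤ`, and `((x)) = 0` for `x ∈ ℤ`. -/
noncomputable def saw (x : ℚ) : ℚ := if x.den = 1 then 0 else x - ⌊x⌋ - 1 / 2

/-- The Dedekind sum `s(a, c) = ∑_{k=1}^{c-1} ((k/c)) ((k a/c))`. -/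
noncomputable def dedekindSum (a c : ℤ) : ℚ :=
  ∑ k ∈ Finset.Icc (1 : ℤ) (c - 1), saw ((k : ℚ) / (c : ℚ)) * saw ((k : ℚ) * (a : ℚ) / (c : ℚ))

/-- The Dedekind symbol `Φ` on `SL₂(ℤ)`. -/
noncomputable def dedekindPhi (γ : Matrix.SpecialLinearGroup (Fin 2) ℤ) : ℚ :=
  if (γ : Matrix (Fin 2) (Fin 2) ℤ) 1 0 = 0 then
    ((γ : Matrix (Fin 2) (Fin 2) ℤ) 0 1 : ℚ) / ((γ : Matrix (Fin 2) (Fin 2) ℤ) 1 1 : ℚ)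
  else
    (((γ : Matrix (Fin 2) (Fin 2) ℤ) 0 0 : ℚ) + ((γ : Matrix (Fin 2) (Fin 2) ℤ) 1 1 : ℚ)) /
        ((γ : Matrix (Fin 2) (Fin 2) ℤ) 1 0 : ℚ) -
      12 * (((γ : Matrix (Fin 2) (Fin 2) ℤ) 1 0).sign : ℚ) *
        dedekindSum ((γ : Matrix (Fin 2) (Fin 2) ℤ) 0 0) |(γ : Matrix (Fin 2) (Fin 2) ℤ) 1 0|

/-- The Rademacher symbol `Ψ(γ) = Φ(γ) - 3 sign(c (a + d))` on `SL₂(ℤ)`. -/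
noncomputable def rademacherPsi (γ : Matrix.SpecialLinearGroup (Fin 2) ℤ) : ℚ :=
  dedekindPhi γ -
    3 * (((γ : Matrix (Fin 2) (Fin 2) ℤ) 1 0 *
      ((γ : Matrix (Fin 2) (Fin 2) ℤ) 0 0 + (γ : Matrix (Fin 2) (Fin 2) ℤ) 1 1)).sign : ℚ)


/-!
Write `r_k = ka mod c` and `q_k = ⌊ka/c⌋`, so that `ka = c q_k + r_k`. Multiplication by `a`
permutes the nonzero residues mod `c`, hence `∑ r_k = ∑ k` and `∑ r_k² = ∑ k²`. The first identity
turns `c² s(a,c)` into `∑ k r_k` up to an explicit term; the second relates `∑ k q_k` to `∑ q_k²`.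
Writing `q_k² = ∑_{j ≤ q_k} (2j - 1)` and counting the lattice points `(j, k)` with `jc < ka` by
columns instead of rows expresses `∑ q_k²` through `∑ j ⌊jc/a⌋`, the corresponding sum for
`s(c,a)`. Eliminating the floor sums leaves only the power sums `∑ k` and `∑ k²`.
-/

open Finset

theorem two_mul_sum_Icc_one_id {n : ℤ} (hn : 0 ≤ n) : 2 * ∑ k ∈ Icc 1 n, k = n * (n + 1) := by
  induction n, hn using Int.leInduction with
  | base => simp
  | succ n hn ih =>
    rw [← insert_Icc_right_eq_Icc_add_one (by omega), sum_insert (by simp), mul_add, ih]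
    ring

theorem six_mul_sum_Icc_one_sq {n : ℤ} (hn : 0 ≤ n) :
    6 * ∑ k ∈ Icc 1 n, k ^ 2 = n * (n + 1) * (2 * n + 1) := by
  induction n, hn using Int.leInduction with
  | base => simp
  | succ n hn ih =>
    rw [← insert_Icc_right_eq_Icc_add_one (by omega), sum_insert (by simp), mul_add, ih]
    ring

theorem natCast_card_Icc_one {R : Type*} [AddGroupWithOne R] {n : ℤ} (hn : 0 ≤ n) :
    (#(Icc 1 n) : R) = n := by
  rw [← Int.cast_natCast, Int.card_Icc, add_sub_cancel_right, Int.toNat_of_nonneg hn]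

theorem sum_Icc_one_two_mul_sub_one {n : ℤ} (hn : 0 ≤ n) :
    ∑ k ∈ Icc 1 n, (2 * k - 1) = n ^ 2 := by
  rw [sum_sub_distrib, ← mul_sum, two_mul_sum_Icc_one_id hn, sum_const, nsmul_one,
    natCast_card_Icc_one hn, Int.cast_id]
  ring

theorem sum_mul_emod_eq (s : Finset ℤ) (a c : ℤ) :
    ∑ k ∈ s, k * (k * a % c) = a * ∑ k ∈ s, k ^ 2 - c * ∑ k ∈ s, k * (k * a / c) := by
  rw [mul_sum, mul_sum, ← sum_sub_distrib]
  exact sum_congr rfl fun k _ => by rw [Int.emod_def]; ring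

section

variable {a c : ℤ}

theorem not_dvd_of_mem_Icc {k : ℤ} (hk : k ∈ Icc 1 (c - 1)) : ¬c ∣ k := by
  rw [mem_Icc] at hk
  intro hdvd
  have := Int.le_of_dvd (by omega) hdvd
  omega

theorem not_dvd_mul_of_mem_Icc (h : IsCoprime a c) {k : ℤ} (hk : k ∈ Icc 1 (c - 1)) :
    ¬c ∣ k * a :=
  fun hdvd => not_dvd_of_mem_Icc hk (h.symm.dvd_of_dvd_mul_right hdvd)

theorem emod_mul_mem_Icc (hc : 0 < c) (h : IsCoprime a c) {k : ℤ} (hk : k ∈ Icc 1 (c - 1)) :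
    k * a % c ∈ Icc 1 (c - 1) := by
  have hne : k * a % c ≠ 0 := fun h0 => not_dvd_mul_of_mem_Icc h hk (Int.dvd_of_emod_eq_zero h0)
  have := Int.emod_nonneg (k * a) hc.ne'
  have := Int.emod_lt_of_pos (k * a) hc
  rw [mem_Icc]
  omega

theorem emod_mul_emod_mul_of_modEq {u : ℤ} (hau : a * u ≡ 1 [ZMOD c]) {k : ℤ}
    (hk : k ∈ Icc 1 (c - 1)) : k * a % c * u % c = k := by
  have hmod : k * a % c * u ≡ k [ZMOD c] :=
    calc k * a % c * u ≡ k * a * u [ZMOD c] := (Int.mod_modEq _ _).mul_right u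
      _ = k * (a * u) := mul_assoc ..
      _ ≡ k * 1 [ZMOD c] := hau.mul_left k
      _ = k := mul_one k
  rw [mem_Icc] at hk
  rw [hmod, Int.emod_eq_of_lt (by omega) (by omega)]

theorem sum_Icc_emod_mul {M : Type*} [AddCommMonoid M] (hc : 0 < c) (h : IsCoprime a c)
    (f : ℤ → M) : ∑ k ∈ Icc 1 (c - 1), f (k * a % c) = ∑ k ∈ Icc 1 (c - 1), f k := by
  obtain ⟨u, v, huv⟩ := h
  have hau : a * u ≡ 1 [ZMOD c] := Int.modEq_iff_dvd.mpr ⟨v, by linarith⟩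
  have hu : IsCoprime u c := ⟨a, v, by linarith⟩
  exact sum_nbij' (fun k => k * a % c) (fun k => k * u % c)
    (fun k hk => emod_mul_mem_Icc hc ⟨u, v, huv⟩ hk) (fun k hk => emod_mul_mem_Icc hc hu hk)
    (fun k hk => emod_mul_emod_mul_of_modEq hau hk)
    (fun k hk => emod_mul_emod_mul_of_modEq (by rwa [mul_comm]) hk) (fun _ _ => rfl)

theorem saw_intCast_div (hc : 0 < c) {m : ℤ} (h : ¬c ∣ m) :
    saw ((m : ℚ) / c) = ((m % c : ℤ) : ℚ) / c - 1 / 2 := by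
  have hc0 : (c : ℚ) ≠ 0 := by exact_mod_cast hc.ne'
  rw [saw, if_neg (by rwa [Rat.den_div_intCast_eq_one_iff _ _ hc.ne']),
    Int.floor_div_cast_of_nonneg hc.le, Int.floor_intCast, Int.emod_def]
  push_cast
  field_simp

theorem dedekindSum_eq (hc : 0 < c) (h : IsCoprime a c) :
    dedekindSum a c =
      ((∑ k ∈ Icc 1 (c - 1), k * (k * a % c) : ℤ) : ℚ) / c ^ 2 - (c - 1) / 4 := by
  have hc0 : (c : ℚ) ≠ 0 := by exact_mod_cast hc.ne'
  have hterm : ∀ k ∈ Icc 1 (c - 1), saw ((k : ℚ) / c) * saw ((k : ℚ) * a / c) =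
      ((k * (k * a % c) : ℤ) : ℚ) / c ^ 2 - ((k : ℚ) + ((k * a % c : ℤ) : ℚ)) / (2 * c)
        + 1 / 4 := by
    intro k hk
    have hkc : k % c = k := by rw [mem_Icc] at hk; exact Int.emod_eq_of_lt (by omega) (by omega)
    rw [saw_intCast_div hc (not_dvd_of_mem_Icc hk), hkc, ← Int.cast_mul,
      saw_intCast_div hc (not_dvd_mul_of_mem_Icc h hk)]
    push_cast
    field_simp
    ring
  have hgauss : 2 * ∑ k ∈ Icc 1 (c - 1), (k : ℚ) = ((c : ℚ) - 1) * c := by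
    have := two_mul_sum_Icc_one_id (n := c - 1) (by omega)
    rw [sub_add_cancel] at this
    rw [← Int.cast_sum]
    exact_mod_cast this
  rw [dedekindSum, sum_congr rfl hterm, sum_add_distrib, sum_sub_distrib, ← sum_div, ← sum_div,
    sum_add_distrib, sum_Icc_emod_mul hc h (fun m => (m : ℚ)), sum_const, nsmul_eq_mul,
    ← two_mul, hgauss, ← Int.cast_sum, natCast_card_Icc_one (by omega), Int.cast_sub,
    Int.cast_one]
  field_simp
  ring

theorem two_mul_sum_mul_ediv (hc : 0 < c) (h : IsCoprime a c) :
    2 * ∑ k ∈ Icc 1 (c - 1), k * a / c = (a - 1) * (c - 1) := by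
  have hgauss := two_mul_sum_Icc_one_id (n := c - 1) (by omega)
  rw [sub_add_cancel] at hgauss
  have hquot : c * ∑ k ∈ Icc 1 (c - 1), k * a / c = (a - 1) * ∑ k ∈ Icc 1 (c - 1), k :=
    calc c * ∑ k ∈ Icc 1 (c - 1), k * a / c = ∑ k ∈ Icc 1 (c - 1), (k * a - k * a % c) := by
          rw [mul_sum]
          exact sum_congr rfl fun k _ => by rw [Int.emod_def]; ring
      _ = (a - 1) * ∑ k ∈ Icc 1 (c - 1), k := by
          rw [sum_sub_distrib, sum_Icc_emod_mul hc h (fun m => m), ← sum_mul]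
          ring
  apply mul_left_cancel₀ hc.ne'
  linear_combination 2 * hquot + (a - 1) * hgauss

theorem sum_sq_mul_ediv (ha : 0 < a) (hc : 0 < c) (h : IsCoprime a c) :
    ∑ k ∈ Icc 1 (c - 1), (k * a / c) ^ 2 =
      ∑ j ∈ Icc 1 (a - 1), (2 * j - 1) * (c - 1 - j * c / a) := by
  have hrow : ∀ k ∈ Icc 1 (c - 1),
      ∑ j ∈ Icc 1 (a - 1) with j * c < k * a, (2 * j - 1) = (k * a / c) ^ 2 := by
    intro k hk
    have hiff : ∀ j, j * c < k * a ↔ j ≤ k * a / c := fun j => by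
      rw [Int.le_ediv_iff_mul_le hc]
      exact ⟨le_of_lt, fun hle => lt_of_le_of_ne hle
        fun heq => not_dvd_mul_of_mem_Icc h hk ⟨j, by rw [← heq, mul_comm]⟩⟩
    rw [mem_Icc] at hk
    have hnonneg : 0 ≤ k * a / c := Int.ediv_nonneg (by nlinarith) hc.le
    have hlt : k * a / c < a := by
      rw [Int.ediv_lt_iff_lt_mul hc]
      nlinarith
    have hfilter : {j ∈ Icc 1 (a - 1) | j * c < k * a} = Icc 1 (k * a / c) := by
      ext j
      simp only [mem_filter, mem_Icc, hiff]
      omega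
    rw [hfilter, sum_Icc_one_two_mul_sub_one hnonneg]
  have hcol : ∀ j ∈ Icc 1 (a - 1),
      (#{k ∈ Icc 1 (c - 1) | j * c < k * a} : ℤ) = c - 1 - j * c / a := by
    intro j hj
    rw [mem_Icc] at hj
    have hnonneg : 0 ≤ j * c / a := Int.ediv_nonneg (by nlinarith) ha.le
    have hlt : j * c / a < c := by
      rw [Int.ediv_lt_iff_lt_mul ha]
      nlinarith
    have hfilter : {k ∈ Icc 1 (c - 1) | j * c < k * a} = Icc (j * c / a + 1) (c - 1) := by
      ext k
      simp only [mem_filter, mem_Icc, ← Int.ediv_lt_iff_lt_mul ha]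
      omega
    rw [hfilter, Int.card_Icc]
    omega
  calc ∑ k ∈ Icc 1 (c - 1), (k * a / c) ^ 2
      = ∑ k ∈ Icc 1 (c - 1), ∑ j ∈ Icc 1 (a - 1) with j * c < k * a, (2 * j - 1) :=
        (sum_congr rfl hrow).symm
    _ = ∑ j ∈ Icc 1 (a - 1), ∑ k ∈ Icc 1 (c - 1) with j * c < k * a, (2 * j - 1) := by
        simp only [sum_filter]
        exact sum_comm
    _ = ∑ j ∈ Icc 1 (a - 1), (2 * j - 1) * (c - 1 - j * c / a) :=
        sum_congr rfl fun j hj => by rw [sum_const, nsmul_eq_mul, hcol j hj, mul_comm]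

theorem sum_mul_emod_reciprocity (ha : 0 < a) (hc : 0 < c) (h : IsCoprime a c) :
    12 * (a ^ 2 * ∑ k ∈ Icc 1 (c - 1), k * (k * a % c) +
        c ^ 2 * ∑ j ∈ Icc 1 (a - 1), j * (j * c % a)) =
      a * c * (a ^ 2 + c ^ 2 + 1 + 3 * a * c * (a + c - 3)) := by
  have hperm : ∑ k ∈ Icc 1 (c - 1), k ^ 2 = a ^ 2 * ∑ k ∈ Icc 1 (c - 1), k ^ 2 -
      2 * a * c * ∑ k ∈ Icc 1 (c - 1), k * (k * a / c) +
        c ^ 2 * ∑ k ∈ Icc 1 (c - 1), (k * a / c) ^ 2 :=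
    calc ∑ k ∈ Icc 1 (c - 1), k ^ 2 = ∑ k ∈ Icc 1 (c - 1), (k * a % c) ^ 2 :=
          (sum_Icc_emod_mul hc h fun m => m ^ 2).symm
      _ = _ := by
          rw [mul_sum, mul_sum, mul_sum, ← sum_sub_distrib, ← sum_add_distrib]
          exact sum_congr rfl fun k _ => by rw [Int.emod_def]; ring
  have hcount : ∑ k ∈ Icc 1 (c - 1), (k * a / c) ^ 2 = (c - 1) * (a - 1) ^ 2 -
      2 * ∑ j ∈ Icc 1 (a - 1), j * (j * c / a) + ∑ j ∈ Icc 1 (a - 1), j * c / a := by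
    rw [sum_sq_mul_ediv ha hc h, ← sum_Icc_one_two_mul_sub_one (n := a - 1) (by omega), mul_sum,
      mul_sum, ← sum_sub_distrib, ← sum_add_distrib]
    exact sum_congr rfl fun j _ => by ring
  linear_combination 12 * a ^ 2 * sum_mul_emod_eq (Icc 1 (c - 1)) a c +
    12 * c ^ 2 * sum_mul_emod_eq (Icc 1 (a - 1)) c a - 6 * a * hperm -
    6 * a * c ^ 2 * hcount - 3 * a * c ^ 2 * two_mul_sum_mul_ediv ha h.symm +
    (a ^ 3 + a) * six_mul_sum_Icc_one_sq (n := c - 1) (by omega) +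
    2 * c ^ 3 * six_mul_sum_Icc_one_sq (n := a - 1) (by omega)

end

/-- Dedekind sum reciprocity: for coprime positive integers `a`, `c`,
`s(a,c) + s(c,a) = -1/4 + (1/12)(a/c + c/a + 1/(ac))`. -/
theorem dedekind_sum_reciprocity (a c : ℤ) (ha : 0 < a) (hc : 0 < c) (h : IsCoprime a c) :
    dedekindSum a c + dedekindSum c a =
      -(1 / 4) + (1 / 12) * ((a : ℚ) / (c : ℚ) + (c : ℚ) / (a : ℚ) + 1 / ((a : ℚ) * (c : ℚ))) := by
  have key := sum_mul_emod_reciprocity ha hc h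
  qify at key
  rw [dedekindSum_eq hc h, dedekindSum_eq ha h.symm]
  push_cast
  have ha0 : (a : ℚ) ≠ 0 := by exact_mod_cast ha.ne'
  have hc0 : (c : ℚ) ≠ 0 := by exact_mod_cast hc.ne'
  field_simp
  linear_combination 4 * key
end

section
/- For every γ ∈ SL₂(ℤ), the Dedekind symbol Φ(γ) is an integer. -/
section DedekindAux
open Finset


private lemma Icc_insert_top (b : ℤ) (h : 1 ≤ b) :
    Finset.Icc (1:ℤ) b = insert b (Finset.Icc 1 (b-1)) := by
  ext x; simp only [Finset.mem_Icc, Finset.mem_insert]; omega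

private lemma sum_id_nat (n : ℕ) :
    2 * ∑ k ∈ Finset.Icc (1:ℤ) (n:ℤ), k = (n+1) * n := by
  induction n with
  | zero => simp
  | succ m ih =>
    rw [show ((m+1:ℕ):ℤ) = (m:ℤ)+1 by push_cast; ring,
      Icc_insert_top ((m:ℤ)+1) (by omega),
      Finset.sum_insert (by simp), show (m:ℤ)+1-1 = (m:ℤ) by ring]
    push_cast
    push_cast at ih
    ring_nf
    ring_nf at ih
    linarith

private lemma sum_sq_nat (n : ℕ) :
    6 * ∑ k ∈ Finset.Icc (1:ℤ) (n:ℤ), k^2 = n * (n+1) * (2*n+1) := by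
  induction n with
  | zero => simp
  | succ m ih =>
    rw [show ((m+1:ℕ):ℤ) = (m:ℤ)+1 by push_cast; ring,
      Icc_insert_top ((m:ℤ)+1) (by omega),
      Finset.sum_insert (by simp), show (m:ℤ)+1-1 = (m:ℤ) by ring]
    push_cast
    push_cast at ih
    ring_nf
    ring_nf at ih
    linarith

private lemma sum_id_aux (c : ℤ) (hc : 0 < c) :
    2 * ∑ k ∈ Finset.Icc (1:ℤ) (c-1), k = c * (c-1) := by
  have h := sum_id_nat (c-1).toNat
  rw [Int.toNat_of_nonneg (by omega)] at h
  rw [h]; ring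

private lemma sum_sq_aux (c : ℤ) (hc : 0 < c) :
    6 * ∑ k ∈ Finset.Icc (1:ℤ) (c-1), k^2 = c * (c-1) * (2*c-1) := by
  have h := sum_sq_nat (c-1).toNat
  rw [Int.toNat_of_nonneg (by omega)] at h
  rw [h]; ring

section Key
variable {c a d : ℤ}

private lemma dvd_mul_sub_emod (c x : ℤ) : c ∣ x - x % c :=
  ⟨x / c, by have := Int.mul_ediv_add_emod x c; linarith⟩

private lemma mem_image_aux (hc : 0 < c) (had : c ∣ a * d - 1) {k : ℤ}
    (hk : k ∈ Finset.Icc (1:ℤ) (c-1)) : k * a % c ∈ Finset.Icc (1:ℤ) (c-1) := by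
  rw [Finset.mem_Icc] at hk ⊢
  have h1 : 0 ≤ k * a % c := Int.emod_nonneg _ (by omega)
  have h2 : k * a % c < c := Int.emod_lt_of_pos _ hc
  have h3 : k * a % c ≠ 0 := by
    intro h0
    have hdvd : c ∣ k * a := Int.dvd_of_emod_eq_zero h0
    have : c ∣ k := by
      have : c ∣ k * a * d := hdvd.mul_right d
      have h4 : c ∣ k * (a * d - 1) := had.mul_left k
      have : c ∣ k := by
        have : k = k * a * d - k * (a * d - 1) := by ring
        rw [this]; exact dvd_sub ‹c ∣ k * a * d› h4
      exact this
    have := Int.le_of_dvd (by omega) this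
    omega
  omega

private lemma inv_aux (hc : 0 < c) (had : c ∣ a * d - 1) {k : ℤ}
    (hk : k ∈ Finset.Icc (1:ℤ) (c-1)) : k * a % c * d % c = k := by
  rw [Finset.mem_Icc] at hk
  have h1 : k * a % c * d % c = k * a * d % c := by
    rw [Int.mul_emod, Int.emod_emod_of_dvd _ (dvd_refl c), ← Int.mul_emod]
  rw [h1]
  have h2 : k * a * d % c = k % c := by
    rw [Int.emod_eq_emod_iff_emod_sub_eq_zero]
    have : k * a * d - k = k * (a * d - 1) := by ring
    rw [this, Int.emod_eq_zero_of_dvd (had.mul_left k)]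
  rw [h2, Int.emod_eq_of_lt (by omega) (by omega)]

private lemma sum_bij_aux (hc : 0 < c) (had : c ∣ a * d - 1) (f : ℤ → ℤ) :
    ∑ k ∈ Finset.Icc (1:ℤ) (c-1), f (k * a % c) = ∑ k ∈ Finset.Icc (1:ℤ) (c-1), f k := by
  have had' : c ∣ d * a - 1 := by rwa [show d * a - 1 = a * d - 1 by ring]
  refine Finset.sum_nbij' (fun k => k * a % c) (fun k => k * d % c) ?_ ?_ ?_ ?_ ?_
  · exact fun k hk => mem_image_aux hc had hk
  · exact fun k hk => mem_image_aux hc had' hk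
  · exact fun k hk => inv_aux hc had hk
  · exact fun k hk => inv_aux hc had' hk
  · exact fun k _ => rfl

/-- Key congruence: `c² ∣ (a+d)c - 3M` where `M = ∑ (2k-c)(2(ka % c)-c)`. -/
private lemma key_dvd (hc : 0 < c) (had : c ∣ a * d - 1) :
    (c^2 : ℤ) ∣ (a + d) * c -
      3 * ∑ k ∈ Finset.Icc (1:ℤ) (c-1), (2*k - c) * (2*(k*a % c) - c) := by
  set I := Finset.Icc (1:ℤ) (c-1) with hI
  set r : ℤ → ℤ := fun k => k * a % c with hr
  set S1 := ∑ k ∈ I, k with hS1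
  set S2 := ∑ k ∈ I, k^2 with hS2
  set N := ∑ k ∈ I, k * r k with hN
  set M := ∑ k ∈ I, (2*k - c) * (2*(r k) - c) with hM
  obtain ⟨m, hm⟩ := id had
  -- basic sums
  have h1 : 2 * S1 = c * (c-1) := sum_id_aux c hc
  have h2 : 6 * S2 = c * (c-1) * (2*c-1) := sum_sq_aux c hc
  have hcard : ((I.card : ℤ)) = c - 1 := by
    rw [hI, Int.card_Icc]; omega
  have hsum_r : ∑ k ∈ I, r k = S1 := sum_bij_aux hc had (fun x => x)
  have hsum_r2 : ∑ k ∈ I, (r k)^2 = S2 := sum_bij_aux hc had (fun x => x^2)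
  -- expand M
  have hMeq : M = 4*N - 2*c*S1 - 2*c*S1 + c*c*(c-1) := by
    rw [hM]
    have : ∀ k ∈ I, (2*k - c) * (2*(r k) - c)
        = 4*(k * r k) - 2*c*k - 2*c*(r k) + c*c := fun k _ => by ring
    rw [Finset.sum_congr rfl this]
    rw [Finset.sum_add_distrib, Finset.sum_sub_distrib, Finset.sum_sub_distrib,
      Finset.sum_const, ← Finset.mul_sum, ← Finset.mul_sum, ← Finset.mul_sum,
      hsum_r, nsmul_eq_mul, hcard, ← hN, ← hS1]
    ring
  -- termwise divisibilities
  have hA : (c^2 : ℤ) ∣ (a + d) * S2 - (a*d + 1) * N := by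
    have : (a + d) * S2 - (a*d + 1) * N
        = ∑ k ∈ I, (a*k - r k) * (k - d * (r k)) := by
      rw [Finset.sum_congr rfl (fun k (_ : k ∈ I) =>
        show (a*k - r k) * (k - d * (r k))
          = a * k^2 + d * (r k)^2 - (a*d+1) * (k * r k) by ring)]
      rw [Finset.sum_sub_distrib, Finset.sum_add_distrib, ← Finset.mul_sum,
        ← Finset.mul_sum, ← Finset.mul_sum, hsum_r2]
      rw [hS2, hN]; ring
    rw [this]
    refine Finset.dvd_sum fun k hk => ?_
    have hd1 : c ∣ a*k - r k := by
      have := dvd_mul_sub_emod c (k*a)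
      rwa [show a*k - r k = k*a - k*a%c by rw [hr]; ring]
    have hd2 : c ∣ k - d * (r k) := by
      have hh : k - d * (r k) = -(k * (a*d-1)) + d * (k*a - k*a%c) := by
        rw [hr]; ring
      rw [hh]
      exact dvd_add ((had.mul_left k).neg_right) ((dvd_mul_sub_emod c (k*a)).mul_left d)
    have := mul_dvd_mul hd1 hd2
    rwa [show c * c = c^2 by ring] at this
  have h6N : c ∣ 6 * N := by
    have ha1 : c ∣ 6*N - 6*a*S2 := by
      have : 6*N - 6*a*S2 = ∑ k ∈ I, (-6*k) * (k*a - k*a%c) := by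
        rw [Finset.sum_congr rfl (fun k (_ : k ∈ I) =>
          show (-6*k) * (k*a - k*a%c) = 6 * (k * r k) - 6*a*k^2 by rw [hr]; ring)]
        rw [Finset.sum_sub_distrib, ← Finset.mul_sum, ← Finset.mul_sum, hN, hS2]
      rw [this]
      exact Finset.dvd_sum fun k _ => (dvd_mul_sub_emod c (k*a)).mul_left _
    have ha2 : c ∣ 6*a*S2 := ⟨a * ((c-1)*(2*c-1)), by linear_combination a * h2⟩
    have := dvd_add ha1 ha2
    rwa [sub_add_cancel] at this
  -- assemble
  obtain ⟨n1, hn1⟩ := h6N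
  have step2 : (c^2 : ℤ) ∣ (a+d) * (c*(c-1)*(2*c-1)) - 12*N - c*m*(6*N) := by
    have e : (a+d) * (c*(c-1)*(2*c-1)) - 12*N - c*m*(6*N)
        = 6 * ((a + d) * S2 - (a*d + 1) * N) := by
      linear_combination -(a+d) * h2 + 6*N*hm
    rw [e]; exact hA.mul_left 6
  have step3 : (c^2 : ℤ) ∣ c*m*(6*N) := ⟨m * n1, by rw [hn1]; ring⟩
  have step4 : (c^2 : ℤ) ∣ (a+d) * (c*(c-1)*(2*c-1)) - 12*N := by
    have := dvd_add step2 step3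
    rwa [sub_add_cancel] at this
  have step5 : (c^2 : ℤ) ∣ (a+d) * (c*(c-1)*(2*c-1)) - (a+d)*c :=
    ⟨(a+d)*(2*c-3), by ring⟩
  have step6 : (c^2 : ℤ) ∣ (a+d)*c - 12*N := by
    have := dvd_sub step4 step5
    rwa [show (a+d) * (c*(c-1)*(2*c-1)) - 12*N - ((a+d) * (c*(c-1)*(2*c-1)) - (a+d)*c)
      = (a+d)*c - 12*N by ring] at this
  have step7 : 3*M = 12*N - 3*c^2*(c-1) := by
    linear_combination 3 * hMeq - 6*c*h1
  rw [show (a + d) * c - 3*M = ((a+d)*c - 12*N) + (12*N - 3*M) by ring, step7]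
  exact dvd_add step6 ⟨3*(c-1), by ring⟩
end Key


private lemma saw_eval (p c : ℤ) (hc : 0 < c) (h : ¬ (c ∣ p)) :
    saw ((p:ℚ)/(c:ℚ)) = ((p % c : ℤ) : ℚ)/(c:ℚ) - 1/2 := by
  have hc0 : (c:ℚ) ≠ 0 := Int.cast_ne_zero.mpr (by omega)
  have hden : ((p:ℚ)/(c:ℚ)).den ≠ 1 := by
    intro hd
    rw [Rat.den_eq_one_iff] at hd
    apply h
    refine ⟨((p:ℚ)/(c:ℚ)).num, ?_⟩
    have : (p : ℚ) = c * (((p:ℚ)/(c:ℚ)).num : ℚ) := by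
      rw [hd]; field_simp
    exact_mod_cast this
  have hfl : ⌊(p:ℚ)/(c:ℚ)⌋ = p / c := by
    have hcn : ((c.toNat : ℕ) : ℚ) = (c:ℚ) := by
      exact_mod_cast congrArg (fun x : ℤ => (x:ℚ)) (Int.toNat_of_nonneg hc.le)
    rw [← hcn, Rat.floor_intCast_div_natCast, Int.toNat_of_nonneg hc.le]
  rw [saw, if_neg hden, hfl]
  have hd : (c:ℚ) * ((p/c : ℤ) : ℚ) + ((p % c : ℤ) : ℚ) = (p:ℚ) := by
    exact_mod_cast congrArg (fun x : ℤ => (x:ℚ)) (Int.mul_ediv_add_emod p c)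
  field_simp
  linarith
private lemma dedekindSum_eval (a c : ℤ) (hc : 0 < c) (hcop : IsCoprime c a) :
    4 * (c:ℚ)^2 * dedekindSum a c
      = ((∑ k ∈ Finset.Icc (1:ℤ) (c-1), (2*k - c) * (2*(k*a % c) - c) : ℤ) : ℚ) := by
  have hc0 : (c:ℚ) ≠ 0 := Int.cast_ne_zero.mpr (by omega)
  rw [dedekindSum, Finset.mul_sum]
  push_cast
  refine Finset.sum_congr rfl fun k hk => ?_
  rw [Finset.mem_Icc] at hk
  have hk1 : ¬ (c ∣ k) := fun hdvd => by
    have := Int.le_of_dvd (by omega) hdvd; omega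
  have hk2 : ¬ (c ∣ k * a) := fun hdvd => hk1 (hcop.dvd_of_dvd_mul_right hdvd)
  have e1 : saw ((k:ℚ)/(c:ℚ)) = ((k % c : ℤ) : ℚ)/(c:ℚ) - 1/2 := saw_eval k c hc hk1
  have e2 : saw ((k:ℚ)*(a:ℚ)/(c:ℚ)) = ((k*a % c : ℤ) : ℚ)/(c:ℚ) - 1/2 := by
    rw [show (k:ℚ)*(a:ℚ) = ((k*a : ℤ):ℚ) by push_cast; ring]
    exact saw_eval (k*a) c hc hk2
  rw [e1, e2, Int.emod_eq_of_lt (by omega) (by omega)]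
  push_cast
  field_simp
  ring


/-- For every `γ ∈ SL₂(ℤ)`, the Dedekind symbol `Φ(γ)` is an integer. -/
theorem dedekindPhi_isInteger (γ : Matrix.SpecialLinearGroup (Fin 2) ℤ) :
    ∃ n : ℤ, dedekindPhi γ = (n : ℚ) := by
  set A : Matrix (Fin 2) (Fin 2) ℤ := (γ : Matrix (Fin 2) (Fin 2) ℤ) with hA
  have hdet : A 0 0 * A 1 1 - A 0 1 * A 1 0 = 1 := by
    rw [← Matrix.det_fin_two]; exact γ.prop
  by_cases hc : A 1 0 = 0
  · rw [hc, mul_zero, sub_zero] at hdet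
    rcases Int.eq_one_or_neg_one_of_mul_eq_one' hdet with ⟨h1, h2⟩ | ⟨h1, h2⟩
    · exact ⟨A 0 1, by rw [dedekindPhi, if_pos hc]; simp only [← hA]; rw [h2]; norm_num⟩
    · exact ⟨-(A 0 1), by
        rw [dedekindPhi, if_pos hc]; simp only [← hA]; rw [h2]; push_cast
        rw [div_neg, div_one]⟩
  · set c0 : ℤ := |A 1 0| with hc0def
    have hc0 : 0 < c0 := abs_pos.mpr hc
    have hdvd : A 1 0 ∣ A 0 0 * A 1 1 - 1 := ⟨A 0 1, by linarith⟩
    have had : c0 ∣ A 0 0 * A 1 1 - 1 := (abs_dvd _ _).mpr hdvd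
    obtain ⟨m, hm⟩ := had
    have hcop : IsCoprime c0 (A 0 0) := ⟨-m, A 1 1, by linarith⟩
    obtain ⟨K, hK⟩ := key_dvd hc0 ⟨m, hm⟩
    refine ⟨(A 1 0).sign * K, ?_⟩
    have heval := dedekindSum_eval (A 0 0) c0 hc0 hcop
    rw [dedekindPhi, if_neg hc]
    simp only [← hA]
    set M : ℤ := ∑ k ∈ Finset.Icc (1:ℤ) (c0-1), (2*k - c0) * (2*(k*(A 0 0) % c0) - c0)
      with hMdef
    have hs : dedekindSum (A 0 0) c0 = (M:ℚ)/(4*(c0:ℚ)^2) := by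
      rw [← heval]; field_simp
    have hKQ : ((A 0 0 : ℚ) + (A 1 1 : ℚ)) * (c0:ℚ) - 3*(M:ℚ) = (c0:ℚ)^2 * (K:ℚ) := by
      exact_mod_cast congrArg (fun x : ℤ => (x:ℚ)) hK
    have hsign : ((A 1 0).sign : ℚ) * (c0:ℚ) = ((A 1 0 : ℤ) : ℚ) := by
      exact_mod_cast congrArg (fun x : ℤ => (x:ℚ)) (Int.sign_mul_abs (A 1 0))
    have hss : ((A 1 0).sign : ℚ) * ((A 1 0).sign : ℚ) = 1 := by
      rcases lt_trichotomy (A 1 0) 0 with h1 | h1 | h1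
      · rw [Int.sign_eq_neg_one_of_neg h1]; norm_num
      · omega
      · rw [Int.sign_eq_one_of_pos h1]; norm_num
    have hcc : ((A 1 0 : ℤ) : ℚ) ≠ 0 := Int.cast_ne_zero.mpr hc
    have hc0q : (c0:ℚ) ≠ 0 := Int.cast_ne_zero.mpr (by omega)
    rw [hs]
    push_cast
    field_simp
    linear_combination 4*(c0:ℚ)*hKQ + (12*(M:ℚ) + 4*(K:ℚ)*(c0:ℚ)^2) *
      (((A 1 0).sign : ℚ) * hsign - (c0:ℚ) * hss)

end DedekindAux
end

section
/- For every γ ∈ SL₂(ℤ), the Rademacher symbol satisfies Ψ(γ⁻¹) = −Ψ(γ) and Ψ(−γ) = Ψ(γ). -/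
instance : Fact (Even (Fintype.card (Fin 2))) := ⟨by simp⟩

lemma den_one_iff (x : ℚ) : x.den = 1 ↔ x = ⌊x⌋ := by
  constructor
  · intro h
    have h' := (Rat.den_eq_one_iff x).mp h
    rw [← h', Int.floor_intCast]
  · intro h
    rw [h, Rat.den_intCast]

lemma saw_add_int (x : ℚ) (n : ℤ) : saw (x + n) = saw x := by
  unfold saw
  have hiff : (x + n).den = 1 ↔ x.den = 1 := by
    rw [den_one_iff, den_one_iff, Int.floor_add_intCast]
    constructor
    · intro h; push_cast at h; linarith
    · intro h; push_cast; linarith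
  by_cases h : x.den = 1
  · rw [if_pos (hiff.mpr h), if_pos h]
  · rw [if_neg (fun hc => h (hiff.mp hc)), if_neg h, Int.floor_add_intCast]
    push_cast; ring

lemma saw_neg (x : ℚ) : saw (-x) = -saw x := by
  unfold saw
  rw [Rat.den_neg_eq_den]
  by_cases h : x.den = 1
  · simp [h]
  · rw [if_neg h, if_neg h, Int.floor_neg]
    have hf : Int.fract x ≠ 0 := by
      rw [Int.fract]
      intro hc
      exact h ((den_one_iff x).mpr (by linarith [sub_eq_zero.mp hc]))
    have hc := Int.ceil_eq_add_one_sub_fract hf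
    rw [Int.fract] at hc
    push_cast at hc ⊢
    linarith

lemma saw_div_congr (m n c : ℤ) (hc : c ≠ 0) (h : c ∣ m - n) :
    saw ((m : ℚ) / c) = saw ((n : ℚ) / c) := by
  obtain ⟨t, ht⟩ := h
  have hm : m = n + c * t := by linarith
  have : (m : ℚ) / c = (n : ℚ) / c + t := by
    rw [hm]; push_cast
    field_simp
  rw [this, saw_add_int]

lemma dedekindSum_neg_left (a c : ℤ) : dedekindSum (-a) c = -dedekindSum a c := by
  unfold dedekindSum
  rw [← Finset.sum_neg_distrib]
  apply Finset.sum_congr rfl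
  intro k _
  have : (k : ℚ) * ((-a : ℤ) : ℚ) / c = -((k : ℚ) * a / c) := by push_cast; ring
  rw [this, saw_neg]; ring

lemma dedekindSum_inv (a d c : ℤ) (hc : 0 < c) (h : c ∣ a * d - 1) :
    dedekindSum d c = dedekindSum a c := by
  unfold dedekindSum
  apply Finset.sum_nbij' (i := fun k => d * k % c) (j := fun k => a * k % c)
  · intro k hk
    rw [Finset.mem_Icc] at hk ⊢
    have h1 : 0 ≤ d * k % c := Int.emod_nonneg _ hc.ne'
    have h2 : d * k % c < c := Int.emod_lt_of_pos _ hc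
    refine ⟨?_, by omega⟩
    by_contra hcon
    have hz : d * k % c = 0 := by omega
    have hdvd : c ∣ d * k := Int.dvd_of_emod_eq_zero hz
    have : c ∣ k := by
      have := Dvd.dvd.mul_left hdvd a
      have h3 : a * (d * k) = k + (a * d - 1) * k := by ring
      have : c ∣ k + (a * d - 1) * k := h3 ▸ this
      exact (Int.dvd_add_right (Dvd.dvd.mul_right h k)).mp (by rwa [add_comm] at this)
    have := Int.le_of_dvd (by omega) this
    omega
  · intro k hk
    rw [Finset.mem_Icc] at hk ⊢
    have h1 : 0 ≤ a * k % c := Int.emod_nonneg _ hc.ne'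
    have h2 : a * k % c < c := Int.emod_lt_of_pos _ hc
    refine ⟨?_, by omega⟩
    by_contra hcon
    have hz : a * k % c = 0 := by omega
    have hdvd : c ∣ a * k := Int.dvd_of_emod_eq_zero hz
    have : c ∣ k := by
      have := Dvd.dvd.mul_left hdvd d
      have h3 : d * (a * k) = k + (a * d - 1) * k := by ring
      have : c ∣ k + (a * d - 1) * k := h3 ▸ this
      exact (Int.dvd_add_right (Dvd.dvd.mul_right h k)).mp (by rwa [add_comm] at this)
    have := Int.le_of_dvd (by omega) this
    omega
  · intro k hk
    rw [Finset.mem_Icc] at hk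
    have h1 : d * k % c ≡ d * k [ZMOD c] := Int.emod_emod_of_dvd _ dvd_rfl
    have h2 : a * (d * k % c) ≡ a * (d * k) [ZMOD c] := h1.mul_left a
    have h3 : k ≡ a * (d * k) [ZMOD c] := by
      apply Int.ModEq.symm
      apply (Int.modEq_iff_dvd.mpr)
      have he : k - a * (d * k) = -((a * d - 1) * k) := by ring
      rw [he]
      exact (h.mul_right k).neg_right
    have h4 : a * (d * k % c) % c = k % c := h2.trans h3.symm
    rw [h4, Int.emod_eq_of_lt (by omega) (by omega)]
  · intro k hk
    rw [Finset.mem_Icc] at hk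
    have h1 : a * k % c ≡ a * k [ZMOD c] := Int.emod_emod_of_dvd _ dvd_rfl
    have h2 : d * (a * k % c) ≡ d * (a * k) [ZMOD c] := h1.mul_left d
    have h3 : k ≡ d * (a * k) [ZMOD c] := by
      apply Int.ModEq.symm
      apply (Int.modEq_iff_dvd.mpr)
      have he : k - d * (a * k) = -((a * d - 1) * k) := by ring
      rw [he]
      exact (h.mul_right k).neg_right
    have h4 : d * (a * k % c) % c = k % c := h2.trans h3.symm
    rw [h4, Int.emod_eq_of_lt (by omega) (by omega)]
  · intro k hk
    rw [Finset.mem_Icc] at hk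
    obtain ⟨u, hu⟩ := h
    have e1 : saw (((d * k % c : ℤ) : ℚ) / (c : ℚ)) = saw ((k : ℚ) * (d : ℚ) / (c : ℚ)) := by
      have hq : (k : ℚ) * (d : ℚ) = ((k * d : ℤ) : ℚ) := by push_cast; ring
      rw [hq]
      exact saw_div_congr _ _ _ hc.ne' ⟨-(d * k / c), by rw [Int.emod_def]; ring⟩
    have e2 : saw (((d * k % c : ℤ) : ℚ) * (a : ℚ) / (c : ℚ)) = saw ((k : ℚ) / (c : ℚ)) := by
      have hq : ((d * k % c : ℤ) : ℚ) * (a : ℚ) = (((d * k % c) * a : ℤ) : ℚ) := by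
        push_cast; ring
      rw [hq]
      exact saw_div_congr _ _ _ hc.ne'
        ⟨u * k - (d * k / c) * a, by rw [Int.emod_def]; linear_combination k * hu⟩
    rw [e1, e2]
    ring

/-- `Ψ(γ⁻¹) = -Ψ(γ)` and `Ψ(-γ) = Ψ(γ)` for every `γ ∈ SL₂(ℤ)`. -/
theorem rademacherPsi_inv_and_neg (γ : Matrix.SpecialLinearGroup (Fin 2) ℤ) :
    rademacherPsi γ⁻¹ = -rademacherPsi γ ∧ rademacherPsi (-γ) = rademacherPsi γ := by
  have hdet := γ.prop
  rw [Matrix.det_fin_two] at hdet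
  have hi : (↑(γ⁻¹) : Matrix (Fin 2) (Fin 2) ℤ) =
      !![(γ : Matrix (Fin 2) (Fin 2) ℤ) 1 1, -(γ : Matrix (Fin 2) (Fin 2) ℤ) 0 1;
         -(γ : Matrix (Fin 2) (Fin 2) ℤ) 1 0, (γ : Matrix (Fin 2) (Fin 2) ℤ) 0 0] := by
    rw [Matrix.SpecialLinearGroup.coe_inv, Matrix.adjugate_fin_two]
  have i00 : (↑(γ⁻¹) : Matrix (Fin 2) (Fin 2) ℤ) 0 0 = (γ : Matrix (Fin 2) (Fin 2) ℤ) 1 1 := by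
    rw [hi]; simp
  have i01 : (↑(γ⁻¹) : Matrix (Fin 2) (Fin 2) ℤ) 0 1 = -(γ : Matrix (Fin 2) (Fin 2) ℤ) 0 1 := by
    rw [hi]; simp
  have i10 : (↑(γ⁻¹) : Matrix (Fin 2) (Fin 2) ℤ) 1 0 = -(γ : Matrix (Fin 2) (Fin 2) ℤ) 1 0 := by
    rw [hi]; simp
  have i11 : (↑(γ⁻¹) : Matrix (Fin 2) (Fin 2) ℤ) 1 1 = (γ : Matrix (Fin 2) (Fin 2) ℤ) 0 0 := by
    rw [hi]; simp
  have n00 : (↑(-γ) : Matrix (Fin 2) (Fin 2) ℤ) 0 0 = -(γ : Matrix (Fin 2) (Fin 2) ℤ) 0 0 := by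
    rw [Matrix.SpecialLinearGroup.coe_neg]; simp
  have n01 : (↑(-γ) : Matrix (Fin 2) (Fin 2) ℤ) 0 1 = -(γ : Matrix (Fin 2) (Fin 2) ℤ) 0 1 := by
    rw [Matrix.SpecialLinearGroup.coe_neg]; simp
  have n10 : (↑(-γ) : Matrix (Fin 2) (Fin 2) ℤ) 1 0 = -(γ : Matrix (Fin 2) (Fin 2) ℤ) 1 0 := by
    rw [Matrix.SpecialLinearGroup.coe_neg]; simp
  have n11 : (↑(-γ) : Matrix (Fin 2) (Fin 2) ℤ) 1 1 = -(γ : Matrix (Fin 2) (Fin 2) ℤ) 1 1 := by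
    rw [Matrix.SpecialLinearGroup.coe_neg]; simp
  unfold rademacherPsi dedekindPhi
  simp only [i00, i01, i10, i11, n00, n01, n10, n11]
  set a := (γ : Matrix (Fin 2) (Fin 2) ℤ) 0 0 with ha
  set b := (γ : Matrix (Fin 2) (Fin 2) ℤ) 0 1 with hb
  set c := (γ : Matrix (Fin 2) (Fin 2) ℤ) 1 0 with hcc
  set d := (γ : Matrix (Fin 2) (Fin 2) ℤ) 1 1 with hd
  by_cases hc : c = 0
  · have had : a * d = 1 := by rw [hc, mul_zero, sub_zero] at hdet; exact hdet
    have haa : a = d := by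
      rcases Int.mul_eq_one_iff_eq_one_or_neg_one.mp had with ⟨h1, h2⟩ | ⟨h1, h2⟩ <;> omega
    constructor <;> simp [hc, haa, neg_div_neg_eq, neg_div, div_neg]
  · have hca : (0:ℤ) < |c| := abs_pos.mpr hc
    have hdvd : |c| ∣ a * d - 1 := by
      rw [abs_dvd]
      exact ⟨b, by linear_combination hdet⟩
    have hs := dedekindSum_inv a d |c| hca hdvd
    have hneg : -c ≠ 0 := neg_ne_zero.mpr hc
    simp only [if_neg hneg, if_neg hc, abs_neg]
    have hsgn : ((-c).sign : ℚ) = -(c.sign : ℚ) := by rw [Int.sign_neg]; push_cast; ring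
    have hsgn2 : ((-c * (d + a)).sign : ℚ) = -((c * (a + d)).sign : ℚ) := by
      rw [show -c * (d + a) = -(c * (a + d)) by ring, Int.sign_neg]; push_cast; ring
    have hsgn3 : ((-c * (-a + -d)).sign : ℚ) = ((c * (a + d)).sign : ℚ) := by
      rw [show -c * (-a + -d) = c * (a + d) by ring]
    have hds := dedekindSum_neg_left a |c|
    have hcq : (c:ℚ) ≠ 0 := Int.cast_ne_zero.mpr hc
    constructor
    · rw [hs, hsgn, hsgn2]
      push_cast
      rw [show ((d:ℚ) + a) / (-(c:ℚ)) = -(((a:ℚ) + d) / c) by rw [div_neg, add_comm]]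
      ring
    · rw [hds, hsgn, hsgn3]
      push_cast
      rw [show ((-(a:ℚ)) + -(d:ℚ)) / (-(c:ℚ)) = ((a:ℚ) + d) / c by rw [← neg_add, neg_div_neg_eq]]
      ring
end

section
/- For every positive integer n and every complex number s with Re(s) > 1, the Dirichlet series of Ramanujan sums satisfies ∑_{q=1}^{∞} c_q(n)·q^{−2s} = (∑_{δ ∣ n} δ^{1−2s}) / ζ(2s), where ζ is the Riemann zeta function. -/
/-!
Grouping the residues `1 ≤ d ≤ q` by `gcd(d, q)` shows that `∑_{e ∣ q} c_e(n)` is the sum of the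
`n`-th powers of all `q`-th roots of unity, i.e. `q` if `q ∣ n` and `0` otherwise. By Möbius
inversion `q ↦ c_q(n)` is the Dirichlet convolution `μ ⋆ g` with `g(d) = d·[d ∣ n]`, so its
Dirichlet series at `w = 2s` is `L(μ, w) · L(g, w) = ζ(w)⁻¹ · ∑_{δ ∣ n} δ^{1-w}`.
-/

/-- The Ramanujan sum `c_q(n) = ∑_{d=1, gcd(d,q)=1}^{q} e^{2πi n d/q}`. -/
noncomputable def ramanujanSum (q n : ℕ) : ℂ :=
  ∑ d ∈ (Finset.Icc 1 q).filter (fun d => Nat.gcd d q = 1),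
    Complex.exp (2 * Real.pi * Complex.I * (n : ℂ) * (d : ℂ) / (q : ℂ))

open ArithmeticFunction Finset Complex
open scoped ArithmeticFunction.Moebius

theorem sum_Icc_one_pow_of_pow_eq_one {R : Type*} [Ring R] [NoZeroDivisors R] [DecidableEq R]
    {x : R} {q : ℕ} (hx : x ^ q = 1) : ∑ d ∈ Icc 1 q, x ^ d = if x = 1 then (q : R) else 0 := by
  have hshift : ∑ d ∈ Icc 1 q, x ^ d = x * ∑ d ∈ range q, x ^ d := by
    rw [← Ico_add_one_right_eq_Icc, sum_Ico_eq_sum_range, mul_sum]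
    simp only [add_tsub_cancel_right, pow_add, pow_one]
  split_ifs with h1
  · simp [h1]
  · have hgeom : (∑ d ∈ range q, x ^ d) * (x - 1) = 0 := by rw [geom_sum_mul, hx, sub_self]
    rw [hshift, (mul_eq_zero.mp hgeom).resolve_right (sub_ne_zero.mpr h1), mul_zero]

theorem sum_Icc_one_exp_eq_ite (q n : ℕ) (hq : q ≠ 0) :
    ∑ d ∈ Icc 1 q, exp (2 * Real.pi * I * n * d / q) = if q ∣ n then (q : ℂ) else 0 := by
  have hζ := isPrimitiveRoot_exp q hq
  have hterm (d : ℕ) :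
      exp (2 * Real.pi * I * n * d / q) = (exp (2 * Real.pi * I / q) ^ n) ^ d := by
    rw [← pow_mul, ← exp_nat_mul]
    congr 1
    push_cast
    ring
  have hpow : (exp (2 * Real.pi * I / q) ^ n) ^ q = 1 := by
    rw [pow_right_comm, hζ.pow_eq_one, one_pow]
  simp_rw [hterm, sum_Icc_one_pow_of_pow_eq_one hpow, hζ.pow_eq_one_iff_dvd]

theorem filter_Icc_one_gcd_mul_eq_image {e : ℕ} (he : e ≠ 0) (x : ℕ) :
    {k ∈ Icc 1 (e * x) | k.gcd (e * x) = e} =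
      {k ∈ Icc 1 x | k.gcd x = 1}.image (e * ·) := by
  have he0 : 0 < e := Nat.pos_of_ne_zero he
  ext k
  simp only [mem_filter, mem_Icc, mem_image]
  constructor
  · rintro ⟨⟨hk1, hkx⟩, hgcd⟩
    obtain ⟨j, rfl⟩ : e ∣ k := hgcd ▸ Nat.gcd_dvd_left k (e * x)
    rw [Nat.gcd_mul_left, mul_eq_left₀ he] at hgcd
    exact ⟨j, ⟨⟨Nat.pos_of_mul_pos_left hk1, le_of_mul_le_mul_left hkx he0⟩, hgcd⟩, rfl⟩
  · rintro ⟨j, ⟨⟨hj1, hjx⟩, hgcd⟩, rfl⟩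
    refine ⟨⟨Nat.mul_pos he0 hj1, Nat.mul_le_mul_left e hjx⟩, ?_⟩
    rw [Nat.gcd_mul_left, hgcd, mul_one]

theorem sum_gcd_eq_exp_eq_ramanujanSum {e : ℕ} (he : e ≠ 0) (x n : ℕ) :
    ∑ k ∈ Icc 1 (e * x) with k.gcd (e * x) = e, exp (2 * Real.pi * I * n * k / ↑(e * x)) =
      ramanujanSum x n := by
  have he' : (e : ℂ) ≠ 0 := Nat.cast_ne_zero.mpr he
  rw [filter_Icc_one_gcd_mul_eq_image he, sum_image fun _ _ _ _ h => mul_left_cancel₀ he h,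
    ramanujanSum]
  refine sum_congr rfl fun k _ => congrArg exp ?_
  push_cast
  rw [show 2 * Real.pi * I * n * (e * k) = e * (2 * Real.pi * I * n * k) by ring,
    mul_div_mul_left _ _ he']

theorem sum_divisors_ramanujanSum (q n : ℕ) (hq : q ≠ 0) :
    ∑ e ∈ q.divisors, ramanujanSum e n = if q ∣ n then (q : ℂ) else 0 := by
  rw [← sum_Icc_one_exp_eq_ite q n hq, ← Nat.sum_div_divisors,
    ← sum_fiberwise_of_maps_to (s := Icc 1 q) (g := fun d => d.gcd q) (t := q.divisors)
      fun d _ => Nat.mem_divisors.mpr ⟨Nat.gcd_dvd_right _ _, hq⟩]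
  refine sum_congr rfl fun e he => ?_
  obtain ⟨x, rfl⟩ := Nat.dvd_of_mem_divisors he
  have he0 : e ≠ 0 := left_ne_zero_of_mul hq
  rw [Nat.mul_div_cancel_left x (Nat.pos_of_ne_zero he0), sum_gcd_eq_exp_eq_ramanujanSum he0]

open scoped LSeries.notation in
theorem ramanujanSum_eq_moebius_convolution (n : ℕ) {q : ℕ} (hq : q ≠ 0) :
    ramanujanSum q n = (↗μ ⍟ fun d => if d ∣ n then (d : ℂ) else 0) q := by
  rw [LSeries.convolution_def]
  exact (sum_eq_iff_sum_mul_moebius_eq.mp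
    (fun q hq => sum_divisors_ramanujanSum q n hq.ne') q (Nat.pos_of_ne_zero hq)).symm

theorem tsum_pnat_mul_cpow_neg_eq_LSeries (f : ℕ → ℂ) (s : ℂ) :
    ∑' q : ℕ+, f q * (q : ℂ) ^ (-s) = LSeries f s := by
  rw [LSeries, ← tsum_pnat_eq_tsum_of_eq_zero (LSeries.term_zero f s)]
  refine tsum_congr fun q => ?_
  rw [LSeries.term_of_ne_zero q.ne_zero, cpow_neg, div_eq_mul_inv]

theorem LSeriesHasSum_ite_dvd {n : ℕ} (hn : n ≠ 0) (s : ℂ) :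
    LSeriesHasSum (fun d => if d ∣ n then (d : ℂ) else 0) s
      (∑ d ∈ n.divisors, (d : ℂ) ^ (1 - s)) := by
  have hterm : ∀ d ∈ n.divisors,
      LSeries.term (fun d => if d ∣ n then (d : ℂ) else 0) s d = (d : ℂ) ^ (1 - s) := by
    intro d hd
    have hd0 : d ≠ 0 := (Nat.pos_of_mem_divisors hd).ne'
    rw [LSeries.term_of_ne_zero hd0, if_pos (Nat.dvd_of_mem_divisors hd), sub_eq_add_neg,
      cpow_add _ _ (Nat.cast_ne_zero.mpr hd0), cpow_one, cpow_neg, div_eq_mul_inv]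
  rw [LSeriesHasSum, ← sum_congr rfl hterm]
  refine hasSum_sum_of_ne_finset_zero fun d hd => ?_
  rcases eq_or_ne d 0 with rfl | hd0
  · exact LSeries.term_zero _ _
  · rw [LSeries.term_of_ne_zero hd0, if_neg fun h => hd (Nat.mem_divisors.mpr ⟨h, hn⟩), zero_div]

open scoped LSeries.notation in
theorem LSeriesHasSum_moebius {s : ℂ} (hs : 1 < s.re) :
    LSeriesHasSum ↗μ s (riemannZeta s)⁻¹ := by
  have hinv : L ↗μ s = (riemannZeta s)⁻¹ := eq_inv_of_mul_eq_one_right <|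
    LSeries_zeta_eq_riemannZeta hs ▸ LSeries_zeta_mul_Lseries_moebius hs
  exact hinv ▸ (LSeriesSummable_moebius_iff.mpr hs).LSeriesHasSum

/-- The Dirichlet series of Ramanujan sums:
`∑_{q≥1} c_q(n) q^{-2s} = (∑_{δ ∣ n} δ^{1-2s}) / ζ(2s)` for `Re(s) > 1`. -/
theorem ramanujanSum_dirichlet_series (n : ℕ) (hn : 0 < n) (s : ℂ) (hs : 1 < s.re) :
    ∑' q : ℕ+, ramanujanSum q n * (q : ℂ) ^ (-(2 * s)) =
      (∑ δ ∈ n.divisors, (δ : ℂ) ^ (1 - 2 * s)) / riemannZeta (2 * s) := by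
  have hs2 : 1 < (2 * s).re := by
    simp only [mul_re, re_ofNat, im_ofNat, zero_mul, sub_zero]
    linarith
  have hconv := (LSeriesHasSum_moebius hs2).convolution (LSeriesHasSum_ite_dvd hn.ne' (2 * s))
  rw [tsum_pnat_mul_cpow_neg_eq_LSeries (ramanujanSum · n),
    LSeries_congr (fun {q} hq => ramanujanSum_eq_moebius_convolution n hq), hconv.LSeries_eq,
    div_eq_inv_mul]
end

section
/- For every squarefree positive integer N, the set Γ₀(N)⁺ is a subgroup of SL₂(ℝ): it contains the identity and is closed under matrix multiplication and inverses. -/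
/-- The set `Γ₀(N)⁺ ⊆ SL₂(ℝ)` of matrices of the form `e^{-1/2} (a, b; c, d)` with
`a, b, c, d, e ∈ ℤ`, `e > 0`, `e ∣ N`, `e ∣ a`, `e ∣ d`, `N ∣ c` and determinant
`a d - b c = e`. -/
def GammaNPlus (N : ℕ) : Set (Matrix.SpecialLinearGroup (Fin 2) ℝ) :=
  {g | ∃ (a b c d : ℤ) (e : ℕ), 0 < e ∧ e ∣ N ∧ (e : ℤ) ∣ a ∧ (e : ℤ) ∣ d ∧ (N : ℤ) ∣ c ∧
    a * d - b * c = (e : ℤ) ∧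
    (g : Matrix (Fin 2) (Fin 2) ℝ) =
      (Real.sqrt e)⁻¹ • !![(a : ℝ), (b : ℝ); (c : ℝ), (d : ℝ)]}

/-- The set `Γ₀(N) ⊆ SL₂(ℝ)` of integer matrices of determinant `1` whose lower-left
entry is divisible by `N`. -/
def Gamma0R (N : ℕ) : Set (Matrix.SpecialLinearGroup (Fin 2) ℝ) :=
  {g | ∃ a b c d : ℤ, a * d - b * c = 1 ∧ (N : ℤ) ∣ c ∧
    (g : Matrix (Fin 2) (Fin 2) ℝ) = !![(a : ℝ), (b : ℝ); (c : ℝ), (d : ℝ)]}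

private lemma smul_fin_two' (r a b c d : ℝ) :
    r • !![a, b; c, d] = !![r * a, r * b; r * c, r * d] := by
  ext i j; fin_cases i <;> fin_cases j <;> simp

/-- For squarefree `N`, the set `Γ₀(N)⁺` is a subgroup of `SL₂(ℝ)`. -/
theorem gammaNPlus_is_subgroup (N : ℕ) (hN : 0 < N) (hsq : Squarefree N) :
    (1 : Matrix.SpecialLinearGroup (Fin 2) ℝ) ∈ GammaNPlus N ∧
      (∀ g h : Matrix.SpecialLinearGroup (Fin 2) ℝ,
        g ∈ GammaNPlus N → h ∈ GammaNPlus N → g * h ∈ GammaNPlus N) ∧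
      (∀ g : Matrix.SpecialLinearGroup (Fin 2) ℝ, g ∈ GammaNPlus N → g⁻¹ ∈ GammaNPlus N) := by
  refine ⟨?_, ?_, ?_⟩
  · refine ⟨1, 0, 0, 1, 1, one_pos, one_dvd _, one_dvd _, one_dvd _, dvd_zero _, by ring, ?_⟩
    simp [Matrix.one_fin_two]
  · rintro g h ⟨a₁, b₁, c₁, d₁, e₁, he₁, he₁N, hea₁, hed₁, hNc₁, hdet₁, hm₁⟩
      ⟨a₂, b₂, c₂, d₂, e₂, he₂, he₂N, hea₂, hed₂, hNc₂, hdet₂, hm₂⟩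
    set G : ℕ := Nat.gcd e₁ e₂ with hGdef
    have hGpos : 0 < G := Nat.gcd_pos_of_pos_left _ he₁
    have hGz : ((G : ℤ)) ≠ 0 := by exact_mod_cast hGpos.ne'
    set f₁ : ℕ := e₁ / G with hf₁def
    set f₂ : ℕ := e₂ / G with hf₂def
    have he₁eq : e₁ = G * f₁ := (Nat.mul_div_cancel' (Nat.gcd_dvd_left _ _)).symm
    have he₂eq : e₂ = G * f₂ := (Nat.mul_div_cancel' (Nat.gcd_dvd_right _ _)).symm
    set e₃ : ℕ := f₁ * f₂ with he₃def
    have he₃pos : 0 < e₃ :=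
      Nat.mul_pos (Nat.div_pos (Nat.le_of_dvd he₁ (Nat.gcd_dvd_left _ _)) hGpos)
        (Nat.div_pos (Nat.le_of_dvd he₂ (Nat.gcd_dvd_right _ _)) hGpos)
    have hcop : Nat.Coprime f₁ f₂ := Nat.coprime_div_gcd_div_gcd hGpos
    have he₃N : e₃ ∣ N :=
      Nat.Coprime.mul_dvd_of_dvd_of_dvd hcop
        (dvd_trans ⟨G, by rw [he₁eq]; ring⟩ he₁N)
        (dvd_trans ⟨G, by rw [he₂eq]; ring⟩ he₂N)
    -- key divisibility: G * e₃ = lcm e₁ e₂ ∣ N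
    have hGe₃ : G * e₃ = Nat.lcm e₁ e₂ := by
      have h1 : G * (G * e₃) = G * Nat.lcm e₁ e₂ := by
        rw [Nat.gcd_mul_lcm, he₁eq, he₂eq, he₃def]; ring
      exact Nat.eq_of_mul_eq_mul_left hGpos h1
    have hGe₃N : G * e₃ ∣ N := hGe₃ ▸ Nat.lcm_dvd he₁N he₂N
    have hGe₁ : (G : ℤ) ∣ (e₁ : ℤ) := Int.natCast_dvd_natCast.2 (Nat.gcd_dvd_left _ _)
    have hGe₂ : (G : ℤ) ∣ (e₂ : ℤ) := Int.natCast_dvd_natCast.2 (Nat.gcd_dvd_right _ _)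
    -- the integer entries of the product, before rescaling
    have hEE : (e₁ : ℤ) * e₂ = (G : ℤ) * ((G : ℤ) * e₃) := by
      have : (e₁ * e₂ : ℕ) = G * (G * e₃) := by rw [he₁eq, he₂eq, he₃def]; ring
      exact_mod_cast this
    have hA : ((G : ℤ) * e₃) ∣ (a₁ * a₂ + b₁ * c₂) := by
      refine dvd_add ?_ ?_
      · exact dvd_trans ⟨(G : ℤ), by rw [hEE]; ring⟩ (mul_dvd_mul hea₁ hea₂)
      · exact dvd_trans (by exact_mod_cast Int.natCast_dvd_natCast.2 hGe₃N) (Dvd.dvd.mul_left hNc₂ _)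
    have hB : ((G : ℤ)) ∣ (a₁ * b₂ + b₁ * d₂) := by
      refine dvd_add ?_ ?_
      · exact Dvd.dvd.mul_right (dvd_trans hGe₁ hea₁) _
      · exact Dvd.dvd.mul_left (dvd_trans hGe₂ hed₂) _
    have hD : ((G : ℤ) * e₃) ∣ (c₁ * b₂ + d₁ * d₂) := by
      refine dvd_add ?_ ?_
      · exact dvd_trans (by exact_mod_cast Int.natCast_dvd_natCast.2 hGe₃N)
          (Dvd.dvd.mul_right hNc₁ _)
      · exact dvd_trans ⟨(G : ℤ), by rw [hEE]; ring⟩ (mul_dvd_mul hed₁ hed₂)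
    have hC : ((G : ℤ) * N) ∣ (c₁ * a₂ + d₁ * c₂) := by
      refine dvd_add ?_ ?_
      · rw [mul_comm]
        exact mul_dvd_mul hNc₁ (dvd_trans hGe₂ hea₂)
      · exact mul_dvd_mul (dvd_trans hGe₁ hed₁) hNc₂
    obtain ⟨a₃, ha₃⟩ := hA
    obtain ⟨b₃, hb₃⟩ := hB
    obtain ⟨c₃, hc₃⟩ := hC
    obtain ⟨d₃, hd₃⟩ := hD
    refine ⟨(e₃ : ℤ) * a₃, b₃, (N : ℤ) * c₃, (e₃ : ℤ) * d₃, e₃, he₃pos, he₃N,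
      Dvd.intro _ rfl, Dvd.intro _ rfl, Dvd.intro _ rfl, ?_, ?_⟩
    · -- determinant
      have hbig : (a₁ * a₂ + b₁ * c₂) * (c₁ * b₂ + d₁ * d₂)
          - (a₁ * b₂ + b₁ * d₂) * (c₁ * a₂ + d₁ * c₂)
          = (a₁ * d₁ - b₁ * c₁) * (a₂ * d₂ - b₂ * c₂) := by ring
      rw [ha₃, hb₃, hc₃, hd₃, hdet₁, hdet₂, hEE] at hbig
      have : (G : ℤ) * (G : ℤ) * ((e₃ : ℤ) * a₃ * ((e₃ : ℤ) * d₃) - b₃ * ((N : ℤ) * c₃))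
          = (G : ℤ) * (G : ℤ) * (e₃ : ℤ) := by linear_combination hbig
      exact mul_left_cancel₀ (by positivity) this
    · -- the matrix identity
      have hsq1 : Real.sqrt e₁ * Real.sqrt e₂ = (G : ℝ) * Real.sqrt e₃ := by
        rw [← Real.sqrt_mul (by positivity)]
        have : (e₁ : ℝ) * e₂ = (G : ℝ) ^ 2 * e₃ := by
          have h := congrArg (Int.cast : ℤ → ℝ) hEE; push_cast at h; linear_combination h
        rw [this, Real.sqrt_mul (by positivity), Real.sqrt_sq (by positivity)]
      have hGR : (G : ℝ) ≠ 0 := by exact_mod_cast hGpos.ne'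
      have hsE₃ : Real.sqrt e₃ ≠ 0 := by positivity
      have hscal : (Real.sqrt e₁)⁻¹ * (Real.sqrt e₂)⁻¹ * (G : ℝ) = (Real.sqrt e₃)⁻¹ := by
        field_simp
        linarith [hsq1]
      have hA' : (a₁ : ℝ) * a₂ + b₁ * c₂ = (G : ℝ) * ((e₃ : ℝ) * a₃) := by
        have := congrArg (Int.cast : ℤ → ℝ) ha₃; push_cast at this; linear_combination this
      have hB' : (a₁ : ℝ) * b₂ + b₁ * d₂ = (G : ℝ) * (b₃ : ℝ) := by
        have := congrArg (Int.cast : ℤ → ℝ) hb₃; push_cast at this; linear_combination this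
      have hC' : (c₁ : ℝ) * a₂ + d₁ * c₂ = (G : ℝ) * ((N : ℝ) * c₃) := by
        have := congrArg (Int.cast : ℤ → ℝ) hc₃; push_cast at this; linear_combination this
      have hD' : (c₁ : ℝ) * b₂ + d₁ * d₂ = (G : ℝ) * ((e₃ : ℝ) * d₃) := by
        have := congrArg (Int.cast : ℤ → ℝ) hd₃; push_cast at this; linear_combination this
      rw [Matrix.SpecialLinearGroup.coe_mul, hm₁, hm₂, smul_mul_smul_comm, Matrix.mul_fin_two,
        smul_fin_two' ((Real.sqrt e₃)⁻¹), smul_fin_two']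
      push_cast
      ext i j
      fin_cases i <;> fin_cases j <;>
        simp [Matrix.cons_val_zero, Matrix.cons_val_one]
      · linear_combination ((Real.sqrt e₁)⁻¹ * (Real.sqrt e₂)⁻¹) * hA'
          + ((e₃ : ℝ) * a₃) * hscal
      · linear_combination ((Real.sqrt e₁)⁻¹ * (Real.sqrt e₂)⁻¹) * hB' + (b₃ : ℝ) * hscal
      · linear_combination ((Real.sqrt e₁)⁻¹ * (Real.sqrt e₂)⁻¹) * hC'
          + ((N : ℝ) * c₃) * hscal
      · linear_combination ((Real.sqrt e₁)⁻¹ * (Real.sqrt e₂)⁻¹) * hD'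
          + ((e₃ : ℝ) * d₃) * hscal
  · rintro g ⟨a, b, c, d, e, he, heN, hea, hed, hNc, hdet, hm⟩
    refine ⟨d, -b, -c, a, e, he, heN, hed, hea, (dvd_neg).2 hNc, by linarith, ?_⟩
    rw [Matrix.SpecialLinearGroup.coe_inv, hm, Matrix.adjugate_smul,
      Matrix.adjugate_fin_two_of]
    simp only [Fintype.card_fin]
    norm_num
end

section
/- For every squarefree positive integer N, the index of Γ₀(N) in Γ₀(N)⁺ equals 2^{ω(N)}, where ω(N) is the number of distinct prime divisors of N. -/
/-- `Γ₀(N)⁺` as a subgroup of `SL₂(ℝ)` (the set `GammaNPlus N` is a subgroup, so it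
coincides with the subgroup it generates). -/
def GammaNPlusSubgroup (N : ℕ) : Subgroup (Matrix.SpecialLinearGroup (Fin 2) ℝ) :=
  Subgroup.closure (GammaNPlus N)

/-- `Γ₀(N)` as a subgroup of `SL₂(ℝ)`. -/
def Gamma0RSubgroup (N : ℕ) : Subgroup (Matrix.SpecialLinearGroup (Fin 2) ℝ) :=
  Subgroup.closure (Gamma0R N)

open Matrix MatrixGroups

theorem Subgroup.index_eq_card_range {G X : Type*} [Group G] {H : Subgroup G} (f : G → X)
    (hf : ∀ x y, f x = f y ↔ x⁻¹ * y ∈ H) : H.index = Nat.card (Set.range f) :=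
  Nat.card_congr <| (Quotient.congrRight fun x y =>
    QuotientGroup.leftRel_apply.trans (hf x y).symm).trans (Setoid.quotientKerEquivRange f)

theorem Nat.card_divisors_of_squarefree {n : ℕ} (hn : Squarefree n) :
    n.divisors.card = 2 ^ n.primeFactors.card := by
  rw [Nat.card_divisors hn.ne_zero, Finset.prod_congr rfl fun p hp => by
    rw [Nat.factorization_eq_one_of_squarefree hn (Nat.prime_of_mem_primeFactors hp)
      (Nat.dvd_of_mem_primeFactors hp)], Finset.prod_const]

theorem Nat.lcm_div_gcd_eq_one_iff {e f : ℕ} (he : e ≠ 0) : e.lcm f / e.gcd f = 1 ↔ e = f := by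
  refine ⟨fun h => ?_, by rintro rfl; simp [Nat.pos_of_ne_zero he]⟩
  have hlg :=
    Nat.eq_of_dvd_of_div_eq_one ((Nat.gcd_dvd_left e f).trans (Nat.dvd_lcm_left e f)) h
  exact Nat.dvd_antisymm ((Nat.dvd_lcm_left e f).trans (hlg ▸ Nat.gcd_dvd_right e f))
    ((Nat.dvd_lcm_right e f).trans (hlg ▸ Nat.gcd_dvd_left e f))

theorem Matrix.exists_eq_smul_of_forall_dvd {m n : Type*} {A : Matrix m n ℤ} {k : ℤ}
    (h : ∀ i j, k ∣ A i j) : ∃ P, A = k • P :=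
  ⟨of fun i j => A i j / k, by ext i j; simp [Int.mul_ediv_cancel' (h i j)]⟩

structure IsAtkinLehnerMatrix (N e : ℕ) (M : Matrix (Fin 2) (Fin 2) ℤ) : Prop where
  dvd_apply_zero_zero : (e : ℤ) ∣ M 0 0
  dvd_apply_one_one : (e : ℤ) ∣ M 1 1
  dvd_apply_one_zero : (N : ℤ) ∣ M 1 0
  det_eq : M.det = e

/-- For squarefree `N`, the `g` with `IsAtkinLehner N e g` form the Atkin–Lehner coset
`Γ₀(N) W_e`. -/
structure IsAtkinLehner (N e : ℕ) (g : SL(2, ℝ)) : Prop where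
  pos : 0 < e
  dvd : e ∣ N
  exists_eq : ∃ M, IsAtkinLehnerMatrix N e M ∧
    (g : Matrix (Fin 2) (Fin 2) ℝ) = (√(e : ℝ))⁻¹ • M.map (↑)

theorem IsAtkinLehnerMatrix.exists_mul_eq_gcd_smul {N e f : ℕ} {M M' : Matrix (Fin 2) (Fin 2) ℤ}
    (hM : IsAtkinLehnerMatrix N e M) (hM' : IsAtkinLehnerMatrix N f M') (he : e ∣ N) (hf : f ∣ N)
    (he0 : 0 < e) :
    ∃ P, M * M' = (e.gcd f : ℤ) • P ∧ IsAtkinLehnerMatrix N (e.lcm f / e.gcd f) P := by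
  obtain ⟨ha, hd, hc, hdet⟩ := hM
  obtain ⟨ha', hd', hc', hdet'⟩ := hM'
  set k := e.gcd f
  set L := e.lcm f
  have hk0 : (k : ℤ) ≠ 0 := by exact_mod_cast (Nat.gcd_pos_of_pos_left f he0).ne'
  have hkL : (k : ℤ) * ((L / k : ℕ) : ℤ) = L := by
    exact_mod_cast Nat.mul_div_cancel' ((Nat.gcd_dvd_left e f).trans (Nat.dvd_lcm_left e f))
  have hke : (k : ℤ) ∣ e := Int.natCast_dvd_natCast.2 (Nat.gcd_dvd_left e f)
  have hkf : (k : ℤ) ∣ f := Int.natCast_dvd_natCast.2 (Nat.gcd_dvd_right e f)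
  have heN : (e : ℤ) ∣ N := Int.natCast_dvd_natCast.2 he
  have hfN : (f : ℤ) ∣ N := Int.natCast_dvd_natCast.2 hf
  have hLN : (L : ℤ) ∣ N := Int.natCast_dvd_natCast.2 (Nat.lcm_dvd he hf)
  have hL : ∀ x : ℤ, (e : ℤ) ∣ x → (f : ℤ) ∣ x → (L : ℤ) ∣ x := fun x hex hfx =>
    Int.natCast_dvd.2 (Nat.lcm_dvd (Int.natCast_dvd.1 hex) (Int.natCast_dvd.1 hfx))
  have hcol : ∀ i, (k : ℤ) ∣ M i 0 :=
    Fin.forall_fin_two.2 ⟨hke.trans ha, (hke.trans heN).trans hc⟩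
  have hrow : ∀ j, (k : ℤ) ∣ M' 1 j :=
    Fin.forall_fin_two.2 ⟨(hkf.trans hfN).trans hc', hkf.trans hd'⟩
  obtain ⟨P, hP⟩ := Matrix.exists_eq_smul_of_forall_dvd (A := M * M') fun i j => by
    rw [mul_apply, Fin.sum_univ_two]
    exact dvd_add ((hcol i).mul_right _) ((hrow j).mul_left _)
  have hdiv : ∀ {i j} {x : ℤ}, k * x ∣ (M * M') i j → x ∣ P i j := fun h => by
    rwa [hP, Matrix.smul_apply, smul_eq_mul, mul_dvd_mul_iff_left hk0] at h
  refine ⟨P, hP, ⟨hdiv ?_, hdiv ?_, hdiv ?_, ?_⟩⟩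
  · rw [hkL, mul_apply, Fin.sum_univ_two]
    exact dvd_add (hL _ (ha.mul_right _) (ha'.mul_left _)) ((hLN.trans hc').mul_left _)
  · rw [hkL, mul_apply, Fin.sum_univ_two]
    exact dvd_add ((hLN.trans hc).mul_right _) (hL _ (hd.mul_right _) (hd'.mul_left _))
  · rw [mul_apply, Fin.sum_univ_two, mul_comm (k : ℤ)]
    exact dvd_add (mul_dvd_mul hc (hkf.trans ha'))
      (mul_comm (N : ℤ) k ▸ mul_dvd_mul (hke.trans hd) hc')
  · have hdetP := congrArg det hP
    rw [det_mul, hdet, hdet', det_smul, Fintype.card_fin] at hdetP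
    have hef : (e : ℤ) * f = k * L := by exact_mod_cast (Nat.gcd_mul_lcm e f).symm
    refine mul_left_cancel₀ (pow_ne_zero 2 hk0) ?_
    rw [← hdetP, hef, ← hkL]
    ring

theorem det_inv_sqrt_smul_map_intCast {e : ℕ} (he : 0 < e) {M : Matrix (Fin 2) (Fin 2) ℤ}
    (hM : M.det = e) : ((√(e : ℝ))⁻¹ • M.map (Int.cast : ℤ → ℝ)).det = 1 := by
  rw [det_smul, ← Int.cast_det, hM, Fintype.card_fin, inv_pow, Real.sq_sqrt (Nat.cast_nonneg e)]
  push_cast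
  exact inv_mul_cancel₀ (by positivity)

namespace IsAtkinLehner

variable {N e f : ℕ} {g h : SL(2, ℝ)}

theorem one (N : ℕ) : IsAtkinLehner N 1 1 :=
  ⟨one_pos, one_dvd N, 1, ⟨one_dvd _, one_dvd _, by simp, det_one⟩, by simp⟩

theorem inv (hg : IsAtkinLehner N e g) : IsAtkinLehner N e g⁻¹ := by
  obtain ⟨M, ⟨ha, hd, hc, hdet⟩, hM⟩ := hg.exists_eq
  refine ⟨hg.pos, hg.dvd, M.adjugate, ⟨?_, ?_, ?_, ?_⟩, ?_⟩
  · simpa [adjugate_fin_two] using hd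
  · simpa [adjugate_fin_two] using ha
  · simpa [adjugate_fin_two] using hc
  · simp [det_adjugate, hdet]
  · rw [Matrix.SpecialLinearGroup.coe_inv, hM, adjugate_smul, Fintype.card_fin, pow_one]
    exact congrArg _ ((Int.castRingHom ℝ).map_adjugate M).symm

theorem mul (hg : IsAtkinLehner N e g) (hh : IsAtkinLehner N f h) :
    IsAtkinLehner N (e.lcm f / e.gcd f) (g * h) := by
  obtain ⟨M, hM, hgM⟩ := hg.exists_eq
  obtain ⟨M', hM', hhM'⟩ := hh.exists_eq
  obtain ⟨P, hP, hPAL⟩ := hM.exists_mul_eq_gcd_smul hM' hg.dvd hh.dvd hg.pos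
  have hk := Nat.gcd_pos_of_pos_left f hg.pos
  have hkL : e.gcd f ∣ e.lcm f := (Nat.gcd_dvd_left e f).trans (Nat.dvd_lcm_left e f)
  have hE : 0 < e.lcm f / e.gcd f :=
    Nat.div_pos (Nat.le_of_dvd (Nat.lcm_pos hg.pos hh.pos) hkL) hk
  refine ⟨hE, (Nat.div_dvd_of_dvd hkL).trans (Nat.lcm_dvd hg.dvd hh.dvd), P, hPAL, ?_⟩
  have hef : (e : ℝ) * f = (e.gcd f : ℝ) ^ 2 * ((e.lcm f / e.gcd f : ℕ) : ℝ) := by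
    rw [sq, mul_assoc, ← Nat.cast_mul (e.gcd f), Nat.mul_div_cancel' hkL]
    exact_mod_cast (Nat.gcd_mul_lcm e f).symm
  have hsqrt : √(e : ℝ) * √(f : ℝ) = e.gcd f * √((e.lcm f / e.gcd f : ℕ) : ℝ) := by
    rw [← Real.sqrt_mul (Nat.cast_nonneg _), hef, Real.sqrt_mul (by positivity),
      Real.sqrt_sq (Nat.cast_nonneg _)]
  have hmap : (M * M').map (Int.cast : ℤ → ℝ) = M.map (↑) * M'.map (↑) :=
    Matrix.map_mul (f := Int.castRingHom ℝ)
  rw [Matrix.SpecialLinearGroup.coe_mul, hgM, hhM', smul_mul_smul_comm, ← hmap, hP,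
    show ((e.gcd f : ℤ) • P).map (Int.cast : ℤ → ℝ) = (e.gcd f : ℝ) • P.map (↑) by
      ext; simp only [map_apply, Matrix.smul_apply, smul_eq_mul, Int.cast_mul, Int.cast_natCast],
    smul_smul, ← mul_inv, hsqrt]
  congr 1
  field_simp

theorem eq_one_of_one (h : IsAtkinLehner N e 1) : e = 1 := by
  obtain ⟨M, ⟨ha, -, -, -⟩, hM⟩ := h.exists_eq
  have he : (0 : ℝ) < e := by exact_mod_cast h.pos
  have h00 : (M 0 0 : ℝ) = √(e : ℝ) := by
    have := congrFun (congrFun hM 0) 0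
    simp only [Matrix.SpecialLinearGroup.coe_one, one_apply_eq, Matrix.smul_apply, map_apply,
      smul_eq_mul] at this
    field_simp at this
    linarith
  have hle : (e : ℝ) ≤ √(e : ℝ) := by
    rw [← h00]
    exact_mod_cast Int.le_of_dvd (by exact_mod_cast h00 ▸ Real.sqrt_pos.2 he) ha
  have : (e : ℝ) ≤ 1 := by nlinarith [Real.sq_sqrt he.le, Real.sqrt_nonneg (e : ℝ)]
  exact le_antisymm (by exact_mod_cast this) h.pos

theorem unique (he : IsAtkinLehner N e g) (hf : IsAtkinLehner N f g) : e = f :=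
  (Nat.lcm_div_gcd_eq_one_iff he.pos.ne').1 (eq_one_of_one (by simpa using he.inv.mul hf))

end IsAtkinLehner

theorem exists_isAtkinLehner {N e : ℕ} (he : 0 < e) (heN : e ∣ N) (hcop : e.Coprime (N / e)) :
    ∃ g, IsAtkinLehner N e g := by
  obtain ⟨u, v, huv⟩ := Nat.isCoprime_iff_coprime.2 hcop
  let M : Matrix (Fin 2) (Fin 2) ℤ := !![e * u, -v; N, e]
  have hdet : M.det = e := by
    have hN : (e : ℤ) * (N / e : ℕ) = N := by exact_mod_cast Nat.mul_div_cancel' heN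
    rw [det_fin_two_of]
    linear_combination (e : ℤ) * huv - v * hN
  exact ⟨⟨_, det_inv_sqrt_smul_map_intCast he hdet⟩, he, heN, M,
    ⟨by simp [M], by simp [M], by simp [M], hdet⟩, rfl⟩

theorem mem_gammaNPlus_iff {N : ℕ} {g : SL(2, ℝ)} :
    g ∈ GammaNPlus N ↔ ∃ e, IsAtkinLehner N e g := by
  constructor
  · rintro ⟨a, b, c, d, e, he, heN, ha, hd, hc, hdet, hg⟩
    refine ⟨e, he, heN, !![a, b; c, d], ⟨by simpa, by simpa, by simpa, by simpa⟩, ?_⟩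
    rw [hg, eta_fin_two (Matrix.map _ _)]
    simp
  · rintro ⟨e, he, heN, M, ⟨ha, hd, hc, hdet⟩, hg⟩
    refine ⟨M 0 0, M 0 1, M 1 0, M 1 1, e, he, heN, ha, hd, hc, by rw [← hdet, det_fin_two], ?_⟩
    rw [hg, eta_fin_two (Matrix.map _ _)]
    simp

theorem mem_gamma0R_iff {N : ℕ} {g : SL(2, ℝ)} : g ∈ Gamma0R N ↔ IsAtkinLehner N 1 g := by
  constructor
  · rintro ⟨a, b, c, d, hdet, hc, hg⟩
    refine ⟨one_pos, one_dvd N, !![a, b; c, d], ⟨by simp, by simp, by simpa, by simpa⟩, ?_⟩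
    rw [hg, eta_fin_two (Matrix.map _ _)]
    simp
  · rintro ⟨-, -, M, ⟨-, -, hc, hdet⟩, hg⟩
    refine ⟨M 0 0, M 0 1, M 1 0, M 1 1, by simpa [det_fin_two] using hdet, hc, ?_⟩
    rw [hg, eta_fin_two (Matrix.map _ _)]
    simp

theorem mem_gammaNPlusSubgroup_iff {N : ℕ} {g : SL(2, ℝ)} :
    g ∈ GammaNPlusSubgroup N ↔ ∃ e, IsAtkinLehner N e g := by
  refine ⟨fun hg => ?_, fun h => Subgroup.subset_closure (mem_gammaNPlus_iff.2 h)⟩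
  induction hg using Subgroup.closure_induction with
  | mem _ hg => exact mem_gammaNPlus_iff.1 hg
  | one => exact ⟨1, .one N⟩
  | mul _ _ _ _ hg hh =>
    obtain ⟨e, hg⟩ := hg
    obtain ⟨f, hh⟩ := hh
    exact ⟨_, hg.mul hh⟩
  | inv _ _ hg =>
    obtain ⟨e, hg⟩ := hg
    exact ⟨e, hg.inv⟩

theorem mem_gamma0RSubgroup_iff {N : ℕ} {g : SL(2, ℝ)} :
    g ∈ Gamma0RSubgroup N ↔ IsAtkinLehner N 1 g := by
  refine ⟨fun hg => ?_, fun h => Subgroup.subset_closure (mem_gamma0R_iff.2 h)⟩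
  induction hg using Subgroup.closure_induction with
  | mem _ hg => exact mem_gamma0R_iff.1 hg
  | one => exact .one N
  | mul _ _ _ _ hg hh => simpa using hg.mul hh
  | inv _ _ hg => exact hg.inv

theorem gamma0_relindex_gammaNPlus_general (N : ℕ) (hsq : Squarefree N) :
    (Gamma0RSubgroup N).relIndex (GammaNPlusSubgroup N) = 2 ^ N.primeFactors.card := by
  choose factor hfactor using fun g : GammaNPlusSubgroup N => mem_gammaNPlusSubgroup_iff.1 g.2
  have hfiber : ∀ x y, factor x = factor y ↔
      x⁻¹ * y ∈ (Gamma0RSubgroup N).subgroupOf (GammaNPlusSubgroup N) := by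
    intro x y
    have hxy := (hfactor x).inv.mul (hfactor y)
    rw [Subgroup.mem_subgroupOf, Subgroup.coe_mul, Subgroup.coe_inv, mem_gamma0RSubgroup_iff,
      ← Nat.lcm_div_gcd_eq_one_iff (hfactor x).pos.ne']
    exact ⟨fun h => h ▸ hxy, hxy.unique⟩
  have hrange : Set.range factor = N.divisors := by
    ext e
    simp only [Set.mem_range, Finset.mem_coe, Nat.mem_divisors]
    refine ⟨fun ⟨x, hx⟩ => ⟨hx ▸ (hfactor x).dvd, hsq.ne_zero⟩, fun ⟨heN, hN⟩ => ?_⟩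
    obtain ⟨g, hg⟩ := exists_isAtkinLehner (Nat.pos_of_dvd_of_pos heN (Nat.pos_of_ne_zero hN))
      heN (Nat.coprime_of_squarefree_mul (by rwa [Nat.mul_div_cancel' heN]))
    exact ⟨⟨g, mem_gammaNPlusSubgroup_iff.2 ⟨e, hg⟩⟩, (hfactor _).unique hg⟩
  rw [Subgroup.relIndex, Subgroup.index_eq_card_range factor hfiber, hrange, Nat.card_coe_set_eq,
    Set.ncard_coe_finset, Nat.card_divisors_of_squarefree hsq]

/-- For squarefree `N`, the index of `Γ₀(N)` in `Γ₀(N)⁺` is `2^{ω(N)}` with `ω(N)`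
the number of distinct prime divisors of `N`. -/
theorem gamma0_relindex_gammaNPlus (N : ℕ) (hN : 0 < N) (hsq : Squarefree N) :
    (Gamma0RSubgroup N).relIndex (GammaNPlusSubgroup N) = 2 ^ N.primeFactors.card :=
  gamma0_relindex_gammaNPlus_general N hsq
end

section
/- For every squarefree positive integer N and every g ∈ Γ₀(N)⁺, the square g² lies in Γ₀(N); hence the quotient group Γ₀(N)⁺/Γ₀(N) is an elementary abelian 2-group. -/
theorem smul_fin_two_eq {x a b c d a' b' c' d' : ℝ} (h1 : x * a = a') (h2 : x * b = b')
    (h3 : x * c = c') (h4 : x * d = d') : x • !![a, b; c, d] = !![a', b'; c', d'] := by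
  subst h1 h2 h3 h4
  ext i j
  fin_cases i <;> fin_cases j <;> simp [Matrix.smul_apply]


/-- For squarefree `N`, the square of every element of `Γ₀(N)⁺` lies in `Γ₀(N)`; together
with the fact that all commutators of elements of `Γ₀(N)⁺` lie in `Γ₀(N)`, this says the
quotient `Γ₀(N)⁺/Γ₀(N)` is an elementary abelian `2`-group. -/
theorem gammaNPlus_sq_mem_gamma0 (N : ℕ) (hN : 0 < N) (hsq : Squarefree N) :
    (∀ g : Matrix.SpecialLinearGroup (Fin 2) ℝ, g ∈ GammaNPlus N → g ^ 2 ∈ Gamma0R N) ∧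
      (∀ g h : Matrix.SpecialLinearGroup (Fin 2) ℝ, g ∈ GammaNPlus N → h ∈ GammaNPlus N →
        g * h * g⁻¹ * h⁻¹ ∈ Gamma0R N) := by
  constructor
  · rintro g ⟨a, b, c, d, e, he, heN, ⟨a1, rfl⟩, ⟨d1, rfl⟩, ⟨c1, rfl⟩, hdet, hg⟩
    have heR : (0:ℝ) < (e:ℝ) := by exact_mod_cast he
    have heZ : ((e:ℤ)) ≠ 0 := by exact_mod_cast he.ne'
    refine ⟨(e:ℤ)*a1*a1 + (e:ℤ)*a1*d1 - 1, b*(a1+d1), (N:ℤ)*c1*(a1+d1),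
        (e:ℤ)*d1*d1 + (e:ℤ)*a1*d1 - 1, ?_, ⟨c1*(a1+d1), by ring⟩, ?_⟩
    · linear_combination (a1+d1)^2 * hdet
    · rw [pow_two, Matrix.SpecialLinearGroup.coe_mul, hg, smul_mul_smul_comm, ← mul_inv, Real.mul_self_sqrt heR.le,
        Matrix.mul_fin_two]
      ext i j
      have hdetR : ((e:ℝ)*a1)*((e:ℝ)*d1) - b*((N:ℝ)*c1) = (e:ℝ) := by exact_mod_cast hdet
      fin_cases i <;> fin_cases j <;>
        simp [Matrix.smul_apply] <;>
        rw [inv_mul_eq_iff_eq_mul₀ heR.ne'] <;> push_cast <;> first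
        | linear_combination -hdetR
        | linear_combination (-2:ℝ)*hdetR
        | linear_combination hdetR
        | ring
  · intro g h hg hh
    obtain ⟨a, b, c, d, e, he, heN, hea, hed, hNc, hdetg, hgm⟩ := hg
    obtain ⟨p, q, r, s, f, hf, hfN, hfp, hfs, hNr, hdeth, hhm⟩ := hh
    -- decompose e, f, N
    obtain ⟨d0, e2, f2, mm, hd0, he2, hf2, hm⟩ :
        ∃ d0 e2 f2 mm : ℕ, 0 < d0 ∧ e = d0 * e2 ∧ f = d0 * f2 ∧ N = d0 * e2 * f2 * mm := by
      obtain ⟨e2, he2⟩ := Nat.gcd_dvd_left e f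
      obtain ⟨f2, hf2⟩ := Nat.gcd_dvd_right e f
      have hd0 : 0 < Nat.gcd e f := Nat.gcd_pos_of_pos_left f he
      have hlcm : Nat.lcm e f ∣ N := Nat.lcm_dvd heN hfN
      set G := Nat.gcd e f with hG
      have hL : Nat.lcm e f = G * e2 * f2 := by
        apply Nat.eq_of_mul_eq_mul_left hd0
        have h1 := Nat.gcd_mul_lcm e f
        rw [← hG] at h1
        rw [h1, he2, hf2]
        ring
      obtain ⟨mm, hmm⟩ := hlcm
      exact ⟨G, e2, f2, mm, hd0, he2, hf2, by rw [hmm, hL]⟩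
    subst he2 hf2 hm
    obtain ⟨a1, rfl⟩ := hea
    obtain ⟨d1, rfl⟩ := hed
    obtain ⟨c1, rfl⟩ := hNc
    obtain ⟨p1, rfl⟩ := hfp
    obtain ⟨s1, rfl⟩ := hfs
    obtain ⟨r1, rfl⟩ := hNr
    have heR : (0:ℝ) < ((d0 * e2 : ℕ) : ℝ) := by exact_mod_cast he
    have hfR : (0:ℝ) < ((d0 * f2 : ℕ) : ℝ) := by exact_mod_cast hf
    have heZ : ((d0 * e2 : ℕ) : ℤ) ≠ 0 := by exact_mod_cast he.ne'
    have hfZ : ((d0 * f2 : ℕ) : ℤ) ≠ 0 := by exact_mod_cast hf.ne'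
    -- reduced determinant relations
    have hXr : (d0:ℤ) * (e2:ℤ) * a1 * d1 - (f2:ℤ) * (mm:ℤ) * b * c1 = 1 := by
      apply mul_left_cancel₀ heZ
      push_cast at hdetg ⊢
      linear_combination hdetg
    have hYr : (d0:ℤ) * (f2:ℤ) * p1 * s1 - (e2:ℤ) * (mm:ℤ) * q * r1 = 1 := by
      apply mul_left_cancel₀ hfZ
      push_cast at hdeth ⊢
      linear_combination hdeth
    refine ⟨(e2:ℤ)*(f2:ℤ)*(mm:ℤ)*(mm:ℤ)*b*b*r1*r1 - (d0:ℤ)*(f2:ℤ)*(f2:ℤ)*(mm:ℤ)*b*c1*s1*s1 + (d0:ℤ)*(e2:ℤ)*(f2:ℤ)*(mm:ℤ)*b*d1*r1*s1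
        - (d0:ℤ)*(e2:ℤ)*(f2:ℤ)*(mm:ℤ)*a1*c1*q*s1 - (d0:ℤ)*(e2:ℤ)*(f2:ℤ)*(mm:ℤ)*a1*b*r1*s1 + (d0:ℤ)*(e2:ℤ)*(f2:ℤ)*(mm:ℤ)*a1*b*p1*r1
        - (d0:ℤ)*(e2:ℤ)*(e2:ℤ)*(mm:ℤ)*a1*a1*q*r1 + (d0:ℤ)*(d0:ℤ)*(e2:ℤ)*(f2:ℤ)*a1*d1*p1*s1,
      (f2:ℤ)*(mm:ℤ)*b*c1*q*s1 - (f2:ℤ)*(mm:ℤ)*b*b*p1*r1 - (e2:ℤ)*(mm:ℤ)*b*d1*q*r1 + (e2:ℤ)*(mm:ℤ)*a1*c1*q*q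
        + (d0:ℤ)*(f2:ℤ)*a1*b*p1*s1 - (d0:ℤ)*(f2:ℤ)*a1*b*p1*p1 - (d0:ℤ)*(e2:ℤ)*a1*d1*p1*q + (d0:ℤ)*(e2:ℤ)*a1*a1*p1*q,
      ((d0:ℤ)*(e2:ℤ)*(f2:ℤ)*(mm:ℤ)) * (-((f2:ℤ)*(mm:ℤ)*c1*c1*q*s1) + (f2:ℤ)*(mm:ℤ)*b*c1*p1*r1 + (e2:ℤ)*(mm:ℤ)*b*d1*r1*r1
        - (e2:ℤ)*(mm:ℤ)*a1*c1*q*r1 - (d0:ℤ)*(f2:ℤ)*c1*d1*s1*s1 + (d0:ℤ)*(f2:ℤ)*c1*d1*p1*s1 + (d0:ℤ)*(e2:ℤ)*d1*d1*r1*s1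
        - (d0:ℤ)*(e2:ℤ)*a1*d1*r1*s1),
      (e2:ℤ)*(f2:ℤ)*(mm:ℤ)*(mm:ℤ)*c1*c1*q*q - (d0:ℤ)*(f2:ℤ)*(f2:ℤ)*(mm:ℤ)*b*c1*p1*p1 + (d0:ℤ)*(e2:ℤ)*(f2:ℤ)*(mm:ℤ)*c1*d1*q*s1
        - (d0:ℤ)*(e2:ℤ)*(f2:ℤ)*(mm:ℤ)*c1*d1*p1*q - (d0:ℤ)*(e2:ℤ)*(f2:ℤ)*(mm:ℤ)*b*d1*p1*r1 + (d0:ℤ)*(e2:ℤ)*(f2:ℤ)*(mm:ℤ)*a1*c1*p1*q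
        - (d0:ℤ)*(e2:ℤ)*(e2:ℤ)*(mm:ℤ)*d1*d1*q*r1 + (d0:ℤ)*(d0:ℤ)*(e2:ℤ)*(f2:ℤ)*a1*d1*p1*s1, ?_, ?_, ?_⟩
    · linear_combination (((d0:ℤ)*(e2:ℤ)*a1*d1 - (f2:ℤ)*(mm:ℤ)*b*c1 + 1) * ((d0:ℤ)*(f2:ℤ)*p1*s1 - (e2:ℤ)*(mm:ℤ)*q*r1)^2) * hXr
        + ((d0:ℤ)*(f2:ℤ)*p1*s1 - (e2:ℤ)*(mm:ℤ)*q*r1 + 1) * hYr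
    · exact ⟨-((f2:ℤ)*(mm:ℤ)*c1*c1*q*s1) + (f2:ℤ)*(mm:ℤ)*b*c1*p1*r1 + (e2:ℤ)*(mm:ℤ)*b*d1*r1*r1
        - (e2:ℤ)*(mm:ℤ)*a1*c1*q*r1 - (d0:ℤ)*(f2:ℤ)*c1*d1*s1*s1 + (d0:ℤ)*(f2:ℤ)*c1*d1*p1*s1 + (d0:ℤ)*(e2:ℤ)*d1*d1*r1*s1
        - (d0:ℤ)*(e2:ℤ)*a1*d1*r1*s1, by push_cast; ring⟩
    · have hginv : ((g⁻¹ : Matrix.SpecialLinearGroup (Fin 2) ℝ) : Matrix (Fin 2) (Fin 2) ℝ)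
          = (Real.sqrt ((d0 * e2 : ℕ) : ℝ))⁻¹ •
            !![((((d0*e2:ℕ):ℤ) * d1 : ℤ) : ℝ), -(b:ℝ);
               -((((d0*e2*f2*mm:ℕ):ℤ) * c1 : ℤ):ℝ), ((((d0*e2:ℕ):ℤ) * a1 : ℤ):ℝ)] := by
        rw [Matrix.SpecialLinearGroup.coe_inv, hgm, Matrix.adjugate_smul,
          Matrix.adjugate_fin_two_of]
        norm_num
      have hhinv : ((h⁻¹ : Matrix.SpecialLinearGroup (Fin 2) ℝ) : Matrix (Fin 2) (Fin 2) ℝ)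
          = (Real.sqrt ((d0 * f2 : ℕ) : ℝ))⁻¹ •
            !![((((d0*f2:ℕ):ℤ) * s1 : ℤ) : ℝ), -(q:ℝ);
               -((((d0*e2*f2*mm:ℕ):ℤ) * r1 : ℤ):ℝ), ((((d0*f2:ℕ):ℤ) * p1 : ℤ):ℝ)] := by
        rw [Matrix.SpecialLinearGroup.coe_inv, hhm, Matrix.adjugate_smul,
          Matrix.adjugate_fin_two_of]
        norm_num
      rw [Matrix.SpecialLinearGroup.coe_mul, Matrix.SpecialLinearGroup.coe_mul,
        Matrix.SpecialLinearGroup.coe_mul, hgm, hhm, hginv, hhinv,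
        smul_mul_smul_comm, smul_mul_smul_comm, smul_mul_smul_comm]
      have hscal : (Real.sqrt ((d0 * e2 : ℕ) : ℝ))⁻¹ * (Real.sqrt ((d0 * f2 : ℕ) : ℝ))⁻¹
          * (Real.sqrt ((d0 * e2 : ℕ) : ℝ))⁻¹ * (Real.sqrt ((d0 * f2 : ℕ) : ℝ))⁻¹
          = (((d0 * e2 : ℕ) : ℝ) * ((d0 * f2 : ℕ) : ℝ))⁻¹ := by
        rw [show (((d0 * e2 : ℕ) : ℝ) * ((d0 * f2 : ℕ) : ℝ))
            = (Real.sqrt ((d0 * e2 : ℕ) : ℝ) * Real.sqrt ((d0 * e2 : ℕ) : ℝ))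
              * (Real.sqrt ((d0 * f2 : ℕ) : ℝ) * Real.sqrt ((d0 * f2 : ℕ) : ℝ)) by
          rw [Real.mul_self_sqrt heR.le, Real.mul_self_sqrt hfR.le]]
        rw [mul_inv, mul_inv, mul_inv]
        ring
      rw [hscal, Matrix.mul_fin_two, Matrix.mul_fin_two, Matrix.mul_fin_two]
      have hefne : (((d0 * e2 : ℕ) : ℝ) * ((d0 * f2 : ℕ) : ℝ)) ≠ 0 := by positivity
      apply smul_fin_two_eq <;>
        rw [inv_mul_eq_iff_eq_mul₀ hefne] <;> push_cast <;> ring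
end

section
/- For every squarefree positive integer N, the group Γ₀(N)⁺ acts transitively on the cusps ℚ ∪ {∞}: for all coprime integers p, q with q ≠ 0 there exists g ∈ Γ₀(N)⁺ whose entries (A, B; C, D) satisfy C ≠ 0 and A·q = C·p, i.e. the Möbius action of g sends ∞ to p/q. In particular Γ₀(N)⁺ has a single equivalence class of cusps. -/
/-- For squarefree `N`, the group `Γ₀(N)⁺` acts transitively on the cusps `ℚ ∪ {∞}`:
for coprime integers `p, q` with `q ≠ 0` there is `g ∈ Γ₀(N)⁺` whose Möbius action
sends `∞` to `p/q`, i.e. whose entries satisfy `C ≠ 0` and `A q = C p`. In particular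
`Γ₀(N)⁺` has a single equivalence class of cusps. -/
theorem gammaNPlus_transitive_on_cusps (N : ℕ) (hN : 0 < N) (hsq : Squarefree N)
    (p q : ℤ) (hq : q ≠ 0) (hpq : IsCoprime p q) :
    ∃ g ∈ GammaNPlus N,
      (g : Matrix (Fin 2) (Fin 2) ℝ) 1 0 ≠ 0 ∧
        (g : Matrix (Fin 2) (Fin 2) ℝ) 0 0 * (q : ℝ) =
          (g : Matrix (Fin 2) (Fin 2) ℝ) 1 0 * (p : ℝ) := by
  classical
  set g0 : ℕ := Nat.gcd N q.natAbs with hg0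
  have hgdvd : g0 ∣ N := Nat.gcd_dvd_left _ _
  obtain ⟨e, heN⟩ := hgdvd
  have hg0pos : 0 < g0 := Nat.gcd_pos_of_pos_left _ hN
  have hepos : 0 < e := by
    rcases Nat.eq_zero_or_pos e with h | h
    · simp [h] at heN; omega
    · exact h
  have hedvd : e ∣ N := ⟨g0, by rw [heN]; ring⟩
  -- e is coprime to q
  have hco : Nat.Coprime e q.natAbs := by
    by_contra h
    have hd : 1 < Nat.gcd e q.natAbs := by
      have : 0 < Nat.gcd e q.natAbs := Nat.gcd_pos_of_pos_left _ hepos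
      omega
    obtain ⟨r, hrp, hrd⟩ := Nat.exists_prime_and_dvd (by omega : Nat.gcd e q.natAbs ≠ 1)
    have hre : r ∣ e := hrd.trans (Nat.gcd_dvd_left _ _)
    have hrq : r ∣ q.natAbs := hrd.trans (Nat.gcd_dvd_right _ _)
    have hrN : r ∣ N := hre.trans hedvd
    have hrg0 : r ∣ g0 := Nat.dvd_gcd hrN hrq
    have : r * r ∣ N := by
      rw [heN]
      exact mul_dvd_mul hrg0 hre
    exact hrp.not_isUnit (hsq r this)
  have hcoZ : IsCoprime ((e : ℤ) * p) q := by
    refine IsCoprime.mul_left ?_ hpq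
    rw [Int.isCoprime_iff_gcd_eq_one]
    simpa [Int.gcd] using hco
  obtain ⟨u, v, huv⟩ := hcoZ
  -- the integer matrix entries
  set A : ℤ := (e : ℤ) * p with hA
  set B : ℤ := -v with hB
  set C : ℤ := (e : ℤ) * q with hC
  set D : ℤ := (e : ℤ) * u with hD
  have hdet : A * D - B * C = (e : ℤ) := by
    rw [hA, hB, hC, hD]; linear_combination (e : ℤ) * huv
  have hepos' : (0 : ℝ) < (e : ℝ) := by exact_mod_cast hepos
  have hse : (0 : ℝ) < Real.sqrt e := Real.sqrt_pos.mpr hepos'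
  have hdetM : (((Real.sqrt e)⁻¹ • !![(A : ℝ), (B : ℝ); (C : ℝ), (D : ℝ)] :
      Matrix (Fin 2) (Fin 2) ℝ)).det = 1 := by
    rw [Matrix.det_smul, Matrix.det_fin_two_of]
    have h1 : ((A : ℝ) * D - B * C) = (e : ℝ) := by exact_mod_cast hdet
    have h2 : ((Real.sqrt e)⁻¹) ^ Fintype.card (Fin 2) = (e : ℝ)⁻¹ := by
      rw [Fintype.card_fin, inv_pow, Real.sq_sqrt hepos'.le]
    rw [h2, h1]
    field_simp
  refine ⟨⟨_, hdetM⟩, ⟨A, B, C, D, e, hepos, hedvd, ⟨p, rfl⟩, ⟨u, rfl⟩, ?_, hdet, rfl⟩, ?_, ?_⟩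
  · -- N ∣ C
    have hg0q : (g0 : ℤ) ∣ q := Int.natCast_dvd.mpr (Nat.gcd_dvd_right _ _)
    obtain ⟨k, hk⟩ := hg0q
    exact ⟨k, by rw [hC, hk, heN]; push_cast; ring⟩
  · -- C entry nonzero
    have hC0 : C ≠ 0 := by
      rw [hC]
      exact mul_ne_zero (by exact_mod_cast hepos.ne') hq
    have h10 : (!![(A : ℝ), (B : ℝ); (C : ℝ), (D : ℝ)] : Matrix (Fin 2) (Fin 2) ℝ) 1 0
        = (C : ℝ) := by simp
    show ((Real.sqrt e)⁻¹ • !![(A : ℝ), (B : ℝ); (C : ℝ), (D : ℝ)] :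
      Matrix (Fin 2) (Fin 2) ℝ) 1 0 ≠ 0
    rw [Matrix.smul_apply, h10, smul_eq_mul]
    exact mul_ne_zero (inv_ne_zero hse.ne') (by exact_mod_cast hC0)
  · -- A q = C p
    have h10 : (!![(A : ℝ), (B : ℝ); (C : ℝ), (D : ℝ)] : Matrix (Fin 2) (Fin 2) ℝ) 1 0
        = (C : ℝ) := by simp
    have h00 : (!![(A : ℝ), (B : ℝ); (C : ℝ), (D : ℝ)] : Matrix (Fin 2) (Fin 2) ℝ) 0 0
        = (A : ℝ) := by simp
    show ((Real.sqrt e)⁻¹ • !![(A : ℝ), (B : ℝ); (C : ℝ), (D : ℝ)] :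
        Matrix (Fin 2) (Fin 2) ℝ) 0 0 * (q : ℝ)
      = ((Real.sqrt e)⁻¹ • !![(A : ℝ), (B : ℝ); (C : ℝ), (D : ℝ)] :
        Matrix (Fin 2) (Fin 2) ℝ) 1 0 * (p : ℝ)
    rw [Matrix.smul_apply, Matrix.smul_apply, h10, h00, smul_eq_mul, smul_eq_mul, hA, hC]
    push_cast
    ring
end
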